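/- arXiv:1108.3323 — 5 statements merged into one kernel-verified Lean document; each statement's English description precedes it below -/
import Mathlib

section
/- Let 𝓕 = {F_i}_{i∈I} be a factorization inverse system over a field F, with index partition I = I_v ⊔ I_e, and fix for each k ∈ I_e a labeling l_k, r_k of the two elements of I_v dominating k. Then the base-change functor β from the category of finite-dimensional F-vector spaces to the category of vector space patching problems for 𝓕 is an equivalence of categories if and only if simultaneous factorization holds over 𝓕, i.e. for every n ≥ 1 and every collection of matrices A_k ∈ GL_n(F_k) for k ∈ I_e there exist matrices A_i ∈ GL_n(F_i) for i ∈ I_v such that A_k = A_{r_k}^{-1} A_{l_k} in GL_n(F_k) for all k ∈ I_e. -/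
/-!
STATEMENT 0: Let 𝓕 = {F_i}_{i∈I} be a factorization inverse system over a field F, with
index partition I = I_v ⊔ I_e, and fix for each k ∈ I_e a labeling l_k, r_k of the two
elements of I_v dominating k.  Then the base-change functor β from the category of
finite-dimensional F-vector spaces to the category of vector space patching problems for
𝓕 is an equivalence of categories if and only if simultaneous factorization holds over
𝓕: for every n ≥ 1 and every collection A_k ∈ GL_n(F_k) (k ∈ I_e) there exist
A_i ∈ GL_n(F_i) (i ∈ I_v) such that A_k = A_{r_k}⁻¹ · A_{l_k} in GL_n(F_k) for all
k ∈ I_e.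
-/

universe u

/-- A *factorization inverse system* over a field `F`: a finite inverse system of fields
indexed by `I = Iv ⊔ Ie`, where each index `k ∈ Ie` is dominated by exactly the two
distinct indices `l k, r k ∈ Iv` (with fixed left/right labels), there are no other
relations, and whose inverse limit (in the category of rings) is `F`. -/
structure FactorizationInverseSystem (F : Type u) [Field F] : Type (u + 1) where
  /-- vertex indices -/
  Iv : Type
  /-- edge indices -/
  Ie : Type
  [finIv : Finite Iv]
  [finIe : Finite Ie]
  /-- the fields at the vertex indices -/
  Fv : Iv → Type u
  /-- the fields at the edge indices -/
  Fe : Ie → Type u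
  [fieldFv : ∀ i, Field (Fv i)]
  [fieldFe : ∀ k, Field (Fe k)]
  /-- the left vertex dominating an edge -/
  l : Ie → Iv
  /-- the right vertex dominating an edge -/
  r : Ie → Iv
  lr_ne : ∀ k, l k ≠ r k
  /-- the inclusion of the left vertex field into an edge field -/
  φl : ∀ k, Fv (l k) →+* Fe k
  /-- the inclusion of the right vertex field into an edge field -/
  φr : ∀ k, Fv (r k) →+* Fe k
  /-- the projections from the inverse limit `F` to the fields of the system -/
  ι : ∀ i, F →+* Fv i
  compat : ∀ k, (φl k).comp (ι (l k)) = (φr k).comp (ι (r k))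
  /-- `F` is the inverse limit of the system: every compatible family comes from a
  unique element of `F`. -/
  limit : ∀ x : ∀ i, Fv i, (∀ k, φl k (x (l k)) = φr k (x (r k))) →
    ∃! a : F, ∀ i, ι i a = x i

attribute [instance] FactorizationInverseSystem.finIv FactorizationInverseSystem.finIe
attribute [instance] FactorizationInverseSystem.fieldFv FactorizationInverseSystem.fieldFe

/-- Base change of a `K`-vector space `V` along a field embedding `φ : K →+* L`:
the tensor product `L ⊗_K V`, where `L` is regarded as a `K`-algebra via `φ`. -/
def bc {K L : Type u} [Field K] [Field L] (φ : K →+* L)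
    (V : Type u) [AddCommGroup V] [Module K V] : Type u :=
  letI := φ.toAlgebra
  TensorProduct K L V

noncomputable instance bc.instAddCommGroup {K L : Type u} [Field K] [Field L] (φ : K →+* L)
    (V : Type u) [AddCommGroup V] [Module K V] : AddCommGroup (bc φ V) :=
  letI := φ.toAlgebra
  (inferInstance : AddCommGroup (TensorProduct K L V))

noncomputable instance bc.instModule {K L : Type u} [Field K] [Field L] (φ : K →+* L)
    (V : Type u) [AddCommGroup V] [Module K V] : Module L (bc φ V) :=
  letI := φ.toAlgebra
  (inferInstance : Module L (TensorProduct K L V))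

noncomputable instance bc.instFiniteDimensional {K L : Type u} [Field K] [Field L]
    (φ : K →+* L) (V : Type u) [AddCommGroup V] [Module K V] [FiniteDimensional K V] :
    FiniteDimensional L (bc φ V) :=
  letI := φ.toAlgebra
  (inferInstance : Module.Finite L (TensorProduct K L V))

/-- Base change of a linear map along a field embedding. -/
noncomputable def bcMap {K L : Type u} [Field K] [Field L] (φ : K →+* L)
    {V W : Type u} [AddCommGroup V] [Module K V] [AddCommGroup W] [Module K W]
    (f : V →ₗ[K] W) : bc φ V →ₗ[L] bc φ W :=
  letI := φ.toAlgebra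
  LinearMap.baseChange L f

theorem bcMap_id {K L : Type u} [Field K] [Field L] (φ : K →+* L)
    {V : Type u} [AddCommGroup V] [Module K V] :
    bcMap φ (LinearMap.id : V →ₗ[K] V) = LinearMap.id := by
  letI := φ.toAlgebra
  exact LinearMap.baseChange_id

theorem bcMap_comp {K L : Type u} [Field K] [Field L] (φ : K →+* L)
    {V W U : Type u} [AddCommGroup V] [Module K V] [AddCommGroup W] [Module K W]
    [AddCommGroup U] [Module K U] (g : W →ₗ[K] U) (f : V →ₗ[K] W) :
    bcMap φ (g.comp f) = (bcMap φ g).comp (bcMap φ f) := by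
  letI := φ.toAlgebra
  exact LinearMap.baseChange_comp (f := f) (g := g) (A := L)

/-- Transport a base change along an equality of field embeddings. -/
noncomputable def bcCast {K L : Type u} [Field K] [Field L] {φ ψ : K →+* L} (V : Type u)
    [AddCommGroup V] [Module K V] (h : φ = ψ) : bc φ V ≃ₗ[L] bc ψ V := by
  subst h; exact LinearEquiv.refl L (bc φ V)

/-- The canonical isomorphism `L ⊗_K (K ⊗_F V) ≅ L ⊗_F V` of base changes along a
composite of field embeddings. -/
noncomputable def bcComp {F K L : Type u} [Field F] [Field K] [Field L]
    (ι : F →+* K) (φ : K →+* L) (V : Type u) [AddCommGroup V] [Module F V] :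
    bc φ (bc ι V) ≃ₗ[L] bc (φ.comp ι) V :=
  letI iFK : Algebra F K := ι.toAlgebra
  letI iKL : Algebra K L := φ.toAlgebra
  letI iFL : Algebra F L := (φ.comp ι).toAlgebra
  haveI : IsScalarTower F K L := IsScalarTower.of_algebraMap_eq (fun _ => rfl)
  TensorProduct.AlgebraTensorModule.cancelBaseChange F K L L V


theorem bcComp_naturality {F K L : Type u} [Field F] [Field K] [Field L]
    (ι : F →+* K) (φ : K →+* L) {V W : Type u} [AddCommGroup V] [Module F V]
    [AddCommGroup W] [Module F W] (f : V →ₗ[F] W) :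
    (bcMap (φ.comp ι) f).comp (bcComp ι φ V).toLinearMap =
      (bcComp ι φ W).toLinearMap.comp (bcMap φ (bcMap ι f)) := by
  letI iFK : Algebra F K := ι.toAlgebra
  letI iKL : Algebra K L := φ.toAlgebra
  letI iFL : Algebra F L := (φ.comp ι).toAlgebra
  haveI : IsScalarTower F K L := IsScalarTower.of_algebraMap_eq (fun _ => rfl)
  apply LinearMap.ext
  intro x
  induction x using TensorProduct.induction_on with
  | zero => exact (LinearMap.map_zero _).trans (LinearMap.map_zero _).symm
  | tmul c m =>
    induction m using TensorProduct.induction_on with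
    | zero =>
      erw [TensorProduct.tmul_zero]
      exact (LinearMap.map_zero _).trans (LinearMap.map_zero _).symm
    | tmul a v =>
      rfl
    | add p q hp hq =>
      erw [TensorProduct.tmul_add]
      exact ((LinearMap.map_add _ _ _).trans (congrArg₂ (· + ·) hp hq)).trans
        (LinearMap.map_add _ _ _).symm
  | add p q hp hq =>
    exact ((LinearMap.map_add _ _ _).trans (congrArg₂ (· + ·) hp hq)).trans
      (LinearMap.map_add _ _ _).symm

theorem bcCast_naturality {K L : Type u} [Field K] [Field L] {φ ψ : K →+* L} (h : φ = ψ)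
    {V W : Type u} [AddCommGroup V] [Module K V] [AddCommGroup W] [Module K W]
    (f : V →ₗ[K] W) :
    (bcMap ψ f).comp (bcCast V h).toLinearMap =
      (bcCast W h).toLinearMap.comp (bcMap φ f) := by
  subst h
  exact (LinearMap.comp_id _).trans (LinearMap.id_comp _).symm

open CategoryTheory

variable {F : Type u} [Field F]

/-- A vector space *patching problem* for a factorization inverse system `S` over `F`:
finite dimensional `F_i`-vector spaces for every index `i ∈ I = Iv ⊔ Ie`, together with
base-change isomorphisms `ν_{i,k} : V_i ⊗_{F_i} F_k ≅ V_k` for every relation `i ≻ k`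
of the system. -/
structure PatchingProblem (S : FactorizationInverseSystem F) : Type (u + 1) where
  Vv : ∀ i : S.Iv, Type u
  Ve : ∀ k : S.Ie, Type u
  [acgVv : ∀ i, AddCommGroup (Vv i)]
  [modVv : ∀ i, Module (S.Fv i) (Vv i)]
  [fdVv : ∀ i, FiniteDimensional (S.Fv i) (Vv i)]
  [acgVe : ∀ k, AddCommGroup (Ve k)]
  [modVe : ∀ k, Module (S.Fe k) (Ve k)]
  [fdVe : ∀ k, FiniteDimensional (S.Fe k) (Ve k)]
  νl : ∀ k : S.Ie, bc (S.φl k) (Vv (S.l k)) ≃ₗ[S.Fe k] Ve k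
  νr : ∀ k : S.Ie, bc (S.φr k) (Vv (S.r k)) ≃ₗ[S.Fe k] Ve k

attribute [instance] PatchingProblem.acgVv PatchingProblem.modVv PatchingProblem.fdVv
attribute [instance] PatchingProblem.acgVe PatchingProblem.modVe PatchingProblem.fdVe

/-- A morphism of patching problems: compatible families of linear maps. -/
@[ext]
structure PatchingProblemHom {S : FactorizationInverseSystem F}
    (X Y : PatchingProblem S) where
  fv : ∀ i : S.Iv, X.Vv i →ₗ[S.Fv i] Y.Vv i
  fe : ∀ k : S.Ie, X.Ve k →ₗ[S.Fe k] Y.Ve k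
  comm_l : ∀ k : S.Ie,
    (fe k).comp (X.νl k).toLinearMap =
      (Y.νl k).toLinearMap.comp (bcMap (S.φl k) (fv (S.l k)))
  comm_r : ∀ k : S.Ie,
    (fe k).comp (X.νr k).toLinearMap =
      (Y.νr k).toLinearMap.comp (bcMap (S.φr k) (fv (S.r k)))

/-- The category of vector space patching problems for `S`. -/
noncomputable instance PatchingProblem.category (S : FactorizationInverseSystem F) :
    Category (PatchingProblem S) where
  Hom X Y := PatchingProblemHom X Y
  id X :=
    { fv := fun _ => LinearMap.id
      fe := fun _ => LinearMap.id
      comm_l := fun k => by rw [bcMap_id, LinearMap.id_comp, LinearMap.comp_id]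
      comm_r := fun k => by rw [bcMap_id, LinearMap.id_comp, LinearMap.comp_id] }
  comp f g :=
    { fv := fun i => (g.fv i).comp (f.fv i)
      fe := fun k => (g.fe k).comp (f.fe k)
      comm_l := fun k => by
        rw [LinearMap.comp_assoc, f.comm_l k, ← LinearMap.comp_assoc, g.comm_l k,
          LinearMap.comp_assoc, ← bcMap_comp]
      comm_r := fun k => by
        rw [LinearMap.comp_assoc, f.comm_r k, ← LinearMap.comp_assoc, g.comm_r k,
          LinearMap.comp_assoc, ← bcMap_comp] }
  id_comp f := by
    apply PatchingProblemHom.ext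
    · funext i; exact LinearMap.comp_id _
    · funext k; exact LinearMap.comp_id _
  comp_id f := by
    apply PatchingProblemHom.ext
    · funext i; exact LinearMap.id_comp _
    · funext k; exact LinearMap.id_comp _
  assoc f g h := by
    apply PatchingProblemHom.ext
    · funext i; exact (LinearMap.comp_assoc _ _ _).symm
    · funext k; exact (LinearMap.comp_assoc _ _ _).symm

/-- The base change functor `β` from the category of finite dimensional `F`-vector
spaces to the category of vector space patching problems for `S`. -/
noncomputable def betaFunctor (S : FactorizationInverseSystem F) :
    FGModuleCat F ⥤ PatchingProblem S where
  obj V :=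
    { Vv := fun i => bc (S.ι i) V
      Ve := fun k => bc ((S.φl k).comp (S.ι (S.l k))) V
      νl := fun k => bcComp (S.ι (S.l k)) (S.φl k) V
      νr := fun k => (bcComp (S.ι (S.r k)) (S.φr k) V).trans (bcCast V (S.compat k).symm) }
  map {V W} f :=
    { fv := fun i => bcMap (S.ι i) f.hom.hom
      fe := fun k => bcMap ((S.φl k).comp (S.ι (S.l k))) f.hom.hom
      comm_l := fun k => bcComp_naturality (S.ι (S.l k)) (S.φl k) f.hom.hom
      comm_r := fun k => by
        apply LinearMap.ext
        intro x
        have h1 := LinearMap.congr_fun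
          (bcComp_naturality (S.ι (S.r k)) (S.φr k) f.hom.hom) x
        have h2 := LinearMap.congr_fun
          (bcCast_naturality (S.compat k).symm f.hom.hom)
          ((bcComp (S.ι (S.r k)) (S.φr k) V) x)
        simp only [LinearMap.comp_apply, LinearEquiv.coe_coe,
          LinearEquiv.coe_toLinearMap, LinearEquiv.trans_apply] at h1 h2 ⊢
        erw [h2, h1] }
  map_id V := by
    apply PatchingProblemHom.ext
    · funext i; exact bcMap_id _
    · funext k; exact bcMap_id _
  map_comp f g := by
    apply PatchingProblemHom.ext
    · funext i; exact bcMap_comp _ _ _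
    · funext k; exact bcMap_comp _ _ _

/-!
Full faithfulness of `β` needs no factorization: a morphism of patching problems is determined
by its vertex components, and in base-changed bases the matrices of these components agree on
every edge, so they glue entrywise to a matrix over the inverse limit `F`.

Factorization governs essential surjectivity. Bases `b_i` of the vertex spaces of a patching
problem (all of one dimension `n`, as the index graph is connected) induce two bases of each
edge space `V_k`, through `ν_{l k}` and `ν_{r k}`; their comparison is a transition matrix
`A_k ∈ GLₙ(F_k)`, and replacing `b_i` by bases with change-of-basis matrices `B_i ∈ GLₙ(F_i)`
turns `A_k` into `B_{r k} A_k B_{l k}⁻¹`. A problem is isomorphic to some `β V` exactly when its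
bases can be chosen with all `A_k = 1`, and every family `(A_k)` arises as the transition
matrices of the problem on the spaces `F_iⁿ` glued by the `A_k`.
-/

section BaseChange

variable {K L : Type u} [Field K] [Field L] (φ : K →+* L)

noncomputable def basisBC {V : Type u} [AddCommGroup V] [Module K V] {η : Type*}
    (b : Module.Basis η K V) : Module.Basis η L (bc φ V) :=
  letI := φ.toAlgebra
  b.baseChange L

lemma bcMap_basisBC {V W : Type u} [AddCommGroup V] [Module K V] [AddCommGroup W]
    [Module K W] {η : Type*} {b : Module.Basis η K V} {c : Module.Basis η K W} {f : V →ₗ[K] W}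
    (h : ∀ j, f (b j) = c j) (j : η) :
    bcMap φ f (basisBC φ b j) = basisBC φ c j := by
  let _ := φ.toAlgebra
  change LinearMap.baseChange L f (b.baseChange L j) = c.baseChange L j
  rw [Module.Basis.baseChange_apply, LinearMap.baseChange_tmul, h,
    Module.Basis.baseChange_apply]

lemma toMatrix_bcMap {V W : Type u} [AddCommGroup V] [Module K V] [AddCommGroup W]
    [Module K W] {μ η : Type*} [Fintype μ] [Fintype η] [DecidableEq μ]
    (b : Module.Basis μ K V) (c : Module.Basis η K W) (f : V →ₗ[K] W) :
    LinearMap.toMatrix (basisBC φ b) (basisBC φ c) (bcMap φ f) =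
      (LinearMap.toMatrix b c f).map φ := by
  let _ := φ.toAlgebra
  ext i j
  rw [LinearMap.toMatrix_apply]
  change ((c.baseChange L).repr (LinearMap.baseChange L f (b.baseChange L j))) i = _
  rw [Module.Basis.baseChange_apply, LinearMap.baseChange_tmul,
    Module.Basis.baseChange_repr_tmul, Matrix.map_apply, LinearMap.toMatrix_apply,
    Algebra.smul_def, mul_one]
  rfl

lemma basisBC_toMatrix {V : Type u} [AddCommGroup V] [Module K V] {η : Type*} [Fintype η]
    [DecidableEq η] (b b' : Module.Basis η K V) :
    (basisBC φ b).toMatrix (basisBC φ b') = (b.toMatrix b').map φ := by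
  rw [← LinearMap.toMatrix_id_eq_basis_toMatrix, ← LinearMap.toMatrix_id_eq_basis_toMatrix,
    ← bcMap_id φ, toMatrix_bcMap]

lemma bcMap_injective {V W : Type u} [AddCommGroup V] [Module K V] [FiniteDimensional K V]
    [AddCommGroup W] [Module K W] [FiniteDimensional K W] :
    Function.Injective (bcMap φ : (V →ₗ[K] W) → _) := by
  intro f g h
  let b := Module.finBasis K V
  let c := Module.finBasis K W
  have hmat := congrArg (LinearMap.toMatrix (basisBC φ b) (basisBC φ c)) h
  rw [toMatrix_bcMap, toMatrix_bcMap] at hmat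
  exact (LinearMap.toMatrix b c).injective (Matrix.map_injective φ.injective hmat)

lemma finrank_bc (V : Type u) [AddCommGroup V] [Module K V] [FiniteDimensional K V] :
    Module.finrank L (bc φ V) = Module.finrank K V := by
  rw [Module.finrank_eq_card_basis (basisBC φ (Module.finBasis K V)),
    Module.finrank_eq_card_basis (Module.finBasis K V), Fintype.card_fin]

lemma bcComp_basisBC {F : Type u} [Field F] (ι : F →+* K) {V : Type u} [AddCommGroup V]
    [Module F V] {η : Type*} (b : Module.Basis η F V) (j : η) :
    bcComp ι φ V (basisBC φ (basisBC ι b) j) = basisBC (φ.comp ι) b j := by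
  let _ : Algebra F K := ι.toAlgebra
  let _ : Algebra K L := φ.toAlgebra
  let _ : Algebra F L := (φ.comp ι).toAlgebra
  have : IsScalarTower F K L := IsScalarTower.of_algebraMap_eq fun _ => rfl
  change TensorProduct.AlgebraTensorModule.cancelBaseChange F K L L V
      ((b.baseChange K).baseChange L j) = b.baseChange L j
  rw [Module.Basis.baseChange_apply, Module.Basis.baseChange_apply,
    Module.Basis.baseChange_apply]
  erw [TensorProduct.AlgebraTensorModule.cancelBaseChange_tmul]
  rw [one_smul]

lemma bcCast_basisBC {φ ψ : K →+* L} (h : φ = ψ) {V : Type u} [AddCommGroup V] [Module K V]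
    {η : Type*} (b : Module.Basis η K V) (j : η) :
    bcCast V h (basisBC φ b j) = basisBC ψ b j := by
  subst h; rfl

end BaseChange

namespace Module.Basis

variable {R M : Type*} [CommRing R] [AddCommGroup M] [Module R M] {η : Type*} [Fintype η]
  [DecidableEq η]

noncomputable def toGL (b b' : Basis η R M) : Matrix.GeneralLinearGroup η R :=
  ⟨b.toMatrix b', b'.toMatrix b, b.toMatrix_mul_toMatrix_flip b', b'.toMatrix_mul_toMatrix_flip b⟩

@[simp]
lemma coe_toGL (b b' : Basis η R M) : (b.toGL b' : Matrix η η R) = b.toMatrix b' := rfl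

@[simp]
lemma inv_toGL (b b' : Basis η R M) : (b.toGL b')⁻¹ = b'.toGL b := rfl

@[simp]
lemma toGL_mul_toGL (b b' b'' : Basis η R M) : b.toGL b' * b'.toGL b'' = b.toGL b'' :=
  Units.ext (b.toMatrix_mul_toMatrix b' b'')

lemma toGL_eq_one_iff {b b' : Basis η R M} : b.toGL b' = 1 ↔ b = b' := by
  refine ⟨fun h => ?_, fun h => Units.ext (h ▸ b.toMatrix_self)⟩
  ext j
  have hM : b.toMatrix b' = 1 := congrArg Units.val h
  rw [← b.sum_toMatrix_smul_self b' j, hM]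
  simp [Matrix.one_apply]

noncomputable def ofGL (b : Basis η R M) (C : Matrix.GeneralLinearGroup η R) : Basis η R M :=
  .ofEquivFun (b.equivFun.trans (Matrix.GeneralLinearGroup.toLin C).toLinearEquiv)

@[simp]
lemma ofGL_toGL (b : Basis η R M) (C : Matrix.GeneralLinearGroup η R) :
    (b.ofGL C).toGL b = C := by
  ext i j
  simp [ofGL, toMatrix_apply, Finsupp.single_eq_pi_single]

end Module.Basis

section InducedBasis

variable {K L : Type u} [Field K] [Field L] (φ : K →+* L)
  {V W V' W' : Type u} [AddCommGroup V] [Module K V] [AddCommGroup W] [Module K W]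
  [AddCommGroup V'] [Module L V'] [AddCommGroup W'] [Module L W'] {η : Type*}

noncomputable def inducedBasis (ν : bc φ V ≃ₗ[L] V') (b : Module.Basis η K V) :
    Module.Basis η L V' :=
  (basisBC φ b).map ν

lemma inducedBasis_toGL [Fintype η] [DecidableEq η] (ν : bc φ V ≃ₗ[L] V')
    (b b' : Module.Basis η K V) :
    (inducedBasis φ ν b).toGL (inducedBasis φ ν b') =
      Units.map φ.mapMatrix.toMonoidHom (b.toGL b') := by
  ext : 1
  have : ν.symm ∘ (basisBC φ b').map ν = basisBC φ b' := by ext; simp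
  simp only [Module.Basis.coe_toGL, Units.coe_map, inducedBasis, Module.Basis.toMatrix_map,
    this, basisBC_toMatrix]
  rfl

@[simp]
lemma inducedBasis_equiv (b : Module.Basis η K V) (c : Module.Basis η L V') :
    inducedBasis φ ((basisBC φ b).equiv c (Equiv.refl η)) b = c := by
  rw [inducedBasis, Module.Basis.map_equiv, Equiv.refl_symm, Module.Basis.reindex_refl]

lemma comp_eq_comp_iff_inducedBasis (fv : V →ₗ[K] W) (fe : V' →ₗ[L] W')
    (νV : bc φ V ≃ₗ[L] V') (νW : bc φ W ≃ₗ[L] W') {b : Module.Basis η K V}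
    {c : Module.Basis η K W} (hbc : ∀ j, fv (b j) = c j) :
    fe.comp νV.toLinearMap = νW.toLinearMap.comp (bcMap φ fv) ↔
      ∀ j, fe (inducedBasis φ νV b j) = inducedBasis φ νW c j := by
  simp only [inducedBasis, Module.Basis.map_apply, ← bcMap_basisBC φ hbc]
  exact ⟨fun h j => LinearMap.congr_fun h _, fun h => (basisBC φ b).ext h⟩

lemma toMatrix_inducedBasis_of_comp_eq [Fintype η] [DecidableEq η] {μ : Type*} [Fintype μ]
    (fv : V →ₗ[K] W) (fe : V' →ₗ[L] W') (νV : bc φ V ≃ₗ[L] V') (νW : bc φ W ≃ₗ[L] W')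
    (b : Module.Basis η K V) (c : Module.Basis μ K W)
    (h : fe.comp νV.toLinearMap = νW.toLinearMap.comp (bcMap φ fv)) :
    LinearMap.toMatrix (inducedBasis φ νV b) (inducedBasis φ νW c) fe =
      (LinearMap.toMatrix b c fv).map φ := by
  rw [← toMatrix_bcMap]
  ext i j
  simp only [LinearMap.toMatrix_apply, inducedBasis, Module.Basis.map_apply,
    Module.Basis.map_repr, LinearEquiv.trans_apply]
  rw [← LinearEquiv.coe_coe νV, ← LinearMap.comp_apply, h]
  simp

lemma symm_comp_eq_comp_of_comp_eq (fv : V ≃ₗ[K] W) (fe : V' ≃ₗ[L] W')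
    (νV : bc φ V ≃ₗ[L] V') (νW : bc φ W ≃ₗ[L] W')
    (h : fe.toLinearMap.comp νV.toLinearMap = νW.toLinearMap.comp (bcMap φ fv)) :
    fe.symm.toLinearMap.comp νW.toLinearMap =
      νV.toLinearMap.comp (bcMap φ fv.symm.toLinearMap) := by
  ext y
  apply fe.injective
  have := LinearMap.congr_fun h (bcMap φ fv.symm.toLinearMap y)
  simp only [LinearMap.comp_apply, LinearEquiv.coe_coe] at this ⊢
  rw [LinearEquiv.apply_symm_apply, this, ← LinearMap.comp_apply (bcMap φ _), ← bcMap_comp,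
    ← LinearEquiv.coe_trans, LinearEquiv.symm_trans_self, LinearEquiv.refl_toLinearMap,
    bcMap_id, LinearMap.id_apply]

end InducedBasis

namespace FactorizationInverseSystem

variable (S : FactorizationInverseSystem F)

def HasSimultaneousFactorization (n : ℕ) : Prop :=
  ∀ A : ∀ k : S.Ie, Matrix.GeneralLinearGroup (Fin n) (S.Fe k),
    ∃ B : ∀ i : S.Iv, Matrix.GeneralLinearGroup (Fin n) (S.Fv i),
      ∀ k : S.Ie,
        A k = (Units.map ((S.φr k).mapMatrix.toMonoidHom) (B (S.r k)))⁻¹ *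
          Units.map ((S.φl k).mapMatrix.toMonoidHom) (B (S.l k))

lemma hasSimultaneousFactorization_zero : S.HasSimultaneousFactorization 0 :=
  fun _ => ⟨fun _ => 1, fun _ => Subsingleton.elim _ _⟩

lemma nonempty_Iv : Nonempty S.Iv := by
  by_contra h
  rw [not_nonempty_iff] at h
  have : IsEmpty S.Ie := ⟨fun k => h.false (S.l k)⟩
  obtain ⟨a, -, ha⟩ := S.limit isEmptyElim isEmptyElim
  exact zero_ne_one ((ha 0 isEmptyElim).trans (ha 1 isEmptyElim).symm)

/-- The graph with vertices `Iv` and edges `l k — r k` is connected: otherwise the indicator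
of a connected component would glue to an idempotent of `F` other than `0` and `1`. -/
lemma apply_eq_of_forall_edge {β : Type*} (d : S.Iv → β) (h : ∀ k, d (S.l k) = d (S.r k))
    (i j : S.Iv) : d i = d j := by
  classical
  let x : ∀ i', S.Fv i' := fun i' => if d i' = d i then 1 else 0
  obtain ⟨a, ha, -⟩ := S.limit x fun k => by simp only [x, h k]; split <;> simp
  by_contra hij
  have ha0 : a = 0 := (S.ι j).injective <| by
    simpa [x, Ne.symm hij] using ha j
  simpa [x, ha0] using ha i

lemma exists_matrix_map_eq {m n : Type*} (M : ∀ i, Matrix m n (S.Fv i))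
    (h : ∀ k, (M (S.l k)).map (S.φl k) = (M (S.r k)).map (S.φr k)) :
    ∃ N : Matrix m n F, ∀ i, N.map (S.ι i) = M i := by
  choose N hN using fun p q =>
    (S.limit (fun i => M i p q) fun k => congrFun (congrFun (h k) p) q).exists
  exact ⟨Matrix.of N, fun i => Matrix.ext fun p q => hN p q i⟩

end FactorizationInverseSystem

namespace PatchingProblem

variable {S : FactorizationInverseSystem F}

section Bases

variable (X : PatchingProblem S) {n : ℕ}

noncomputable def leftBasis (b : ∀ i, Module.Basis (Fin n) (S.Fv i) (X.Vv i)) (k : S.Ie) :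
    Module.Basis (Fin n) (S.Fe k) (X.Ve k) :=
  inducedBasis (S.φl k) (X.νl k) (b (S.l k))

noncomputable def rightBasis (b : ∀ i, Module.Basis (Fin n) (S.Fv i) (X.Vv i)) (k : S.Ie) :
    Module.Basis (Fin n) (S.Fe k) (X.Ve k) :=
  inducedBasis (S.φr k) (X.νr k) (b (S.r k))

def IsCompatible (b : ∀ i, Module.Basis (Fin n) (S.Fv i) (X.Vv i)) : Prop :=
  ∀ k, X.leftBasis b k = X.rightBasis b k

noncomputable def transition (b : ∀ i, Module.Basis (Fin n) (S.Fv i) (X.Vv i)) (k : S.Ie) :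
    Matrix.GeneralLinearGroup (Fin n) (S.Fe k) :=
  (X.rightBasis b k).toGL (X.leftBasis b k)

variable {X}

lemma isCompatible_iff_transition_eq_one {b : ∀ i, Module.Basis (Fin n) (S.Fv i) (X.Vv i)} :
    X.IsCompatible b ↔ ∀ k, X.transition b k = 1 := by
  refine forall_congr' fun k => ?_
  rw [transition, Module.Basis.toGL_eq_one_iff, eq_comm]

lemma transition_eq_mul (b b' : ∀ i, Module.Basis (Fin n) (S.Fv i) (X.Vv i)) (k : S.Ie) :
    X.transition b' k =
      Units.map (S.φr k).mapMatrix.toMonoidHom ((b' (S.r k)).toGL (b (S.r k))) *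
        X.transition b k *
          Units.map (S.φl k).mapMatrix.toMonoidHom ((b (S.l k)).toGL (b' (S.l k))) := by
  rw [transition, transition, ← inducedBasis_toGL _ (X.νr k), ← inducedBasis_toGL _ (X.νl k)]
  simp only [leftBasis, rightBasis, Module.Basis.toGL_mul_toGL]

lemma exists_isCompatible (hn : S.HasSimultaneousFactorization n)
    (b : ∀ i, Module.Basis (Fin n) (S.Fv i) (X.Vv i)) :
    ∃ b' : ∀ i, Module.Basis (Fin n) (S.Fv i) (X.Vv i), X.IsCompatible b' := by
  obtain ⟨C, hC⟩ := hn (X.transition b)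
  refine ⟨fun i => (b i).ofGL (C i), isCompatible_iff_transition_eq_one.2 fun k => ?_⟩
  rw [transition_eq_mul b, hC k, Module.Basis.ofGL_toGL, ← Module.Basis.inv_toGL,
    Module.Basis.ofGL_toGL, map_inv]
  group

end Bases

lemma finrank_Vv_eq (X : PatchingProblem S) (i j : S.Iv) :
    Module.finrank (S.Fv i) (X.Vv i) = Module.finrank (S.Fv j) (X.Vv j) :=
  S.apply_eq_of_forall_edge (fun i => Module.finrank (S.Fv i) (X.Vv i)) (fun k =>
    ((finrank_bc _ _).symm.trans (X.νl k).finrank_eq).trans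
      ((X.νr k).finrank_eq.symm.trans (finrank_bc _ _))) i j

section Iso

variable {X Y : PatchingProblem S}

lemma hom_ext_of_fv {f g : X ⟶ Y} (h : f.fv = g.fv) : f = g := by
  refine PatchingProblemHom.ext h (funext fun k => ?_)
  have hl : (f.fe k).comp (X.νl k).toLinearMap = (g.fe k).comp (X.νl k).toLinearMap := by
    rw [f.comm_l, g.comm_l, h]
  ext y
  simpa using LinearMap.congr_fun hl ((X.νl k).symm y)

noncomputable def isoVv (e : X ≅ Y) (i : S.Iv) : X.Vv i ≃ₗ[S.Fv i] Y.Vv i :=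
  .ofLinearMap (e.hom.fv i) (e.inv.fv i) (congrFun (congrArg PatchingProblemHom.fv e.inv_hom_id) i)
    (congrFun (congrArg PatchingProblemHom.fv e.hom_inv_id) i)

noncomputable def isoMk (ev : ∀ i, X.Vv i ≃ₗ[S.Fv i] Y.Vv i) (ee : ∀ k, X.Ve k ≃ₗ[S.Fe k] Y.Ve k)
    (hl : ∀ k, (ee k).toLinearMap.comp (X.νl k).toLinearMap =
      (Y.νl k).toLinearMap.comp (bcMap (S.φl k) (ev (S.l k)).toLinearMap))
    (hr : ∀ k, (ee k).toLinearMap.comp (X.νr k).toLinearMap =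
      (Y.νr k).toLinearMap.comp (bcMap (S.φr k) (ev (S.r k)).toLinearMap)) :
    X ≅ Y where
  hom := ⟨fun i => ev i, fun k => ee k, hl, hr⟩
  inv := ⟨fun i => (ev i).symm, fun k => (ee k).symm,
    fun k => symm_comp_eq_comp_of_comp_eq _ _ _ _ _ (hl k),
    fun k => symm_comp_eq_comp_of_comp_eq _ _ _ _ _ (hr k)⟩
  hom_inv_id := hom_ext_of_fv <| funext fun i => LinearMap.ext fun x => (ev i).symm_apply_apply x
  inv_hom_id := hom_ext_of_fv <| funext fun i => LinearMap.ext fun x => (ev i).apply_symm_apply x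

variable {n m : ℕ}

lemma IsCompatible.map (e : X ≅ Y) {b : ∀ i, Module.Basis (Fin n) (S.Fv i) (X.Vv i)}
    (hb : X.IsCompatible b) : Y.IsCompatible fun i => (b i).map (isoVv e i) := by
  intro k
  have hl := (comp_eq_comp_iff_inducedBasis (S.φl k) _ _ _ _ fun j =>
    ((b (S.l k)).map_apply (isoVv e _) j).symm).1 (e.hom.comm_l k)
  have hr := (comp_eq_comp_iff_inducedBasis (S.φr k) _ _ _ _ fun j =>
    ((b (S.r k)).map_apply (isoVv e _) j).symm).1 (e.hom.comm_r k)
  refine Module.Basis.eq_of_apply_eq fun j => ?_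
  rw [leftBasis, rightBasis, ← hl, ← hr]
  exact congrArg (e.hom.fe k) (congrFun (congrArg DFunLike.coe (hb k)) j)

noncomputable def isoOfIsCompatible {b : ∀ i, Module.Basis (Fin n) (S.Fv i) (X.Vv i)}
    {c : ∀ i, Module.Basis (Fin n) (S.Fv i) (Y.Vv i)} (hb : X.IsCompatible b)
    (hc : Y.IsCompatible c) : X ≅ Y :=
  isoMk (fun i => (b i).equiv (c i) (Equiv.refl _))
    (fun k => (X.leftBasis b k).equiv (Y.leftBasis c k) (Equiv.refl _))
    (fun k => (comp_eq_comp_iff_inducedBasis _ _ _ _ _ fun j => (b _).equiv_apply _ _ _).2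
      fun j => (X.leftBasis b k).equiv_apply _ _ _)
    (fun k => (comp_eq_comp_iff_inducedBasis _ _ _ _ _ fun j => (b _).equiv_apply _ _ _).2
      fun j => by
        rw [← rightBasis, ← rightBasis, ← hb k, ← hc k]
        exact (X.leftBasis b k).equiv_apply _ _ _)

lemma toMatrix_fe_leftBasis (f : X ⟶ Y) (b : ∀ i, Module.Basis (Fin n) (S.Fv i) (X.Vv i))
    (c : ∀ i, Module.Basis (Fin m) (S.Fv i) (Y.Vv i)) (k : S.Ie) :
    LinearMap.toMatrix (X.leftBasis b k) (Y.leftBasis c k) (f.fe k) =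
      (LinearMap.toMatrix (b (S.l k)) (c (S.l k)) (f.fv (S.l k))).map (S.φl k) :=
  toMatrix_inducedBasis_of_comp_eq _ _ _ _ _ _ _ (f.comm_l k)

lemma toMatrix_fe_rightBasis (f : X ⟶ Y) (b : ∀ i, Module.Basis (Fin n) (S.Fv i) (X.Vv i))
    (c : ∀ i, Module.Basis (Fin m) (S.Fv i) (Y.Vv i)) (k : S.Ie) :
    LinearMap.toMatrix (X.rightBasis b k) (Y.rightBasis c k) (f.fe k) =
      (LinearMap.toMatrix (b (S.r k)) (c (S.r k)) (f.fv (S.r k))).map (S.φr k) :=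
  toMatrix_inducedBasis_of_comp_eq _ _ _ _ _ _ _ (f.comm_r k)

end Iso

variable {n : ℕ}

lemma betaFunctor_obj_isCompatible (V : FGModuleCat F) (c : Module.Basis (Fin n) F V) :
    ((betaFunctor S).obj V).IsCompatible fun i => basisBC (S.ι i) c := by
  intro k
  refine Module.Basis.eq_of_apply_eq fun j => ?_
  simp only [leftBasis, rightBasis, inducedBasis, Module.Basis.map_apply]
  erw [bcComp_basisBC, LinearEquiv.trans_apply, bcComp_basisBC, bcCast_basisBC]

noncomputable def ofTransition (A : ∀ k : S.Ie, Matrix.GeneralLinearGroup (Fin n) (S.Fe k)) :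
    PatchingProblem S where
  Vv i := Fin n → S.Fv i
  Ve k := Fin n → S.Fe k
  νl k := (basisBC (S.φl k) (Pi.basisFun _ _)).equiv
    ((Pi.basisFun (S.Fe k) (Fin n)).ofGL (A k)⁻¹) (Equiv.refl _)
  νr k := (basisBC (S.φr k) (Pi.basisFun _ _)).equiv (Pi.basisFun _ _) (Equiv.refl _)

lemma transition_ofTransition (A : ∀ k : S.Ie, Matrix.GeneralLinearGroup (Fin n) (S.Fe k)) :
    (ofTransition A).transition (fun i => Pi.basisFun (S.Fv i) (Fin n)) = A := by
  funext k
  change (inducedBasis _ ((basisBC (S.φr k) _).equiv _ _) _).toGL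
    (inducedBasis _ ((basisBC (S.φl k) _).equiv _ _) _) = A k
  erw [inducedBasis_equiv, inducedBasis_equiv]
  exact (Module.Basis.inv_toGL _ _).symm.trans
    ((congrArg _ (Module.Basis.ofGL_toGL _ _)).trans (inv_inv _))

end PatchingProblem

section Beta

variable (S : FactorizationInverseSystem F)

open PatchingProblem

lemma betaFunctor_faithful : (betaFunctor S).Faithful where
  map_injective {V W} f g hfg := by
    obtain ⟨i⟩ := S.nonempty_Iv
    exact FGModuleCat.hom_ext <| bcMap_injective (S.ι i) <|
      congrFun (congrArg PatchingProblemHom.fv hfg) i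

lemma betaFunctor_full : (betaFunctor S).Full where
  map_surjective {V W} m := by
    let b := Module.finBasis F V
    let c := Module.finBasis F W
    obtain ⟨N, hN⟩ := S.exists_matrix_map_eq
      (fun i => LinearMap.toMatrix (basisBC (S.ι i) b) (basisBC (S.ι i) c) (m.fv i)) fun k => by
        have hl := toMatrix_fe_leftBasis m (fun i => basisBC (S.ι i) b)
          (fun i => basisBC (S.ι i) c) k
        rw [betaFunctor_obj_isCompatible V b k, betaFunctor_obj_isCompatible W c k] at hl
        exact hl.symm.trans (toMatrix_fe_rightBasis m _ _ k)
    refine ⟨FGModuleCat.ofHom (Matrix.toLin b c N), hom_ext_of_fv <| funext fun i => ?_⟩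
    apply (LinearMap.toMatrix (basisBC (S.ι i) b) (basisBC (S.ι i) c)).injective
    change LinearMap.toMatrix _ _ (bcMap (S.ι i) (Matrix.toLin b c N)) = _
    rw [toMatrix_bcMap, LinearMap.toMatrix_toLin, hN]

lemma betaFunctor_essSurj (h : ∀ n, S.HasSimultaneousFactorization n) :
    (betaFunctor S).EssSurj where
  mem_essImage X := by
    obtain ⟨i₀⟩ := S.nonempty_Iv
    let n := Module.finrank (S.Fv i₀) (X.Vv i₀)
    obtain ⟨b, hb⟩ := X.exists_isCompatible (h n) fun i =>
      Module.finBasisOfFinrankEq (S.Fv i) (X.Vv i) (X.finrank_Vv_eq i i₀)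
    exact ⟨FGModuleCat.of F (Fin n → F),
      ⟨isoOfIsCompatible (betaFunctor_obj_isCompatible _ (Pi.basisFun F (Fin n))) hb⟩⟩

lemma hasSimultaneousFactorization_of_essSurj [(betaFunctor S).EssSurj] (n : ℕ) :
    S.HasSimultaneousFactorization n := by
  intro A
  let e := (betaFunctor S).objObjPreimageIso (ofTransition A)
  obtain ⟨i₀⟩ := S.nonempty_Iv
  have hV : Module.finrank F ((betaFunctor S).objPreimage (ofTransition A)) = n :=
    (finrank_bc (S.ι i₀) _).symm.trans ((isoVv e i₀).finrank_eq.trans (Module.finrank_fin_fun _))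
  let c := Module.finBasisOfFinrankEq F _ hV
  let std : ∀ i, Module.Basis (Fin n) (S.Fv i) ((ofTransition A).Vv i) :=
    fun i => Pi.basisFun (S.Fv i) (Fin n)
  let b := fun i => (basisBC (S.ι i) c).map (isoVv e i)
  have hb : (ofTransition A).IsCompatible b := (betaFunctor_obj_isCompatible _ c).map e
  refine ⟨fun i => (b i).toGL (std i), fun k => ?_⟩
  have h := transition_eq_mul std b k
  rw [isCompatible_iff_transition_eq_one.1 hb k, transition_ofTransition,
    ← Module.Basis.inv_toGL (b (S.l k)), map_inv] at h
  exact eq_inv_mul_of_mul_eq (mul_inv_eq_one.1 h.symm)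

lemma betaFunctor_essSurj_iff :
    (betaFunctor S).EssSurj ↔ ∀ n, S.HasSimultaneousFactorization n :=
  ⟨fun _ => hasSimultaneousFactorization_of_essSurj S, betaFunctor_essSurj S⟩

end Beta

/-- THEOREM (Proposition `factn_equiv_of_cats`): `β` is an equivalence of categories if
and only if simultaneous factorization holds over the system: for every `n ≥ 1` and
every collection of matrices `A_k ∈ GLₙ(F_k)` (k ∈ Ie), there exist matrices
`B_i ∈ GLₙ(F_i)` (i ∈ Iv) with `A_k = B_{r k}⁻¹ * B_{l k}` in `GLₙ(F_k)` for all
`k ∈ Ie` (the matrices being mapped into `GLₙ(F_k)` via the inclusions `φl k, φr k`). -/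
theorem stmt_0 (S : FactorizationInverseSystem F) :
    (betaFunctor S).IsEquivalence ↔
    (∀ n : ℕ, 1 ≤ n →
      ∀ A : ∀ k : S.Ie, Matrix.GeneralLinearGroup (Fin n) (S.Fe k),
        ∃ B : ∀ i : S.Iv, Matrix.GeneralLinearGroup (Fin n) (S.Fv i),
          ∀ k : S.Ie,
            A k = (Units.map ((S.φr k).mapMatrix.toMonoidHom) (B (S.r k)))⁻¹ *
              Units.map ((S.φl k).mapMatrix.toMonoidHom) (B (S.l k))) := by
  refine ⟨fun _ n _ => (betaFunctor_essSurj_iff S).1 inferInstance n, fun h => ?_⟩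
  have := betaFunctor_faithful S
  have := betaFunctor_full S
  have := (betaFunctor_essSurj_iff S).2 fun n =>
    n.eq_zero_or_pos.elim (· ▸ S.hasSimultaneousFactorization_zero) (h n)
  exact { }
end

section
/- Let R be a local domain that is not a field and is complete with respect to the adic topology of its maximal ideal, and let v be a discrete valuation on the fraction field of R. Then R is contained in the valuation ring of v; that is, v(r) ≥ 0 for every nonzero r ∈ R. -/
/-!
Every `x ∈ 𝔪` has `v x ≤ 1`: otherwise `v (1 + x) = v x = exp D` with `D > 0`. A complete local
ring is Henselian, so `1 + x` is a `q`-th power for every `q` invertible in `R`, and such `q` are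
unbounded (of two consecutive integers one is a unit); but `exp D` is not a `q`-th power in `ℤᵐ⁰`
once `q > D`. For `r ∈ R` and `0 ≠ s ∈ 𝔪`, the bounds `v s * v r ^ n = v (s * r ^ n) ≤ 1` for all
`n` then force `v r ≤ 1`.
-/

open IsLocalRing Polynomial WithZero

namespace WithZero

theorem pow_ne_exp_of_pos_of_lt {q : ℕ} {D : ℤ} (hD : 0 < D) (hDq : D < q) (x : ℤᵐ⁰) :
    x ^ q ≠ exp D := by
  intro h
  have hq : q ≠ 0 := by omega
  have hx : x ≠ 0 := by rintro rfl; exact exp_ne_zero (h.symm.trans (zero_pow hq))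
  lift x to ℤ using hx
  rw [← exp_nsmul, exp_inj, nsmul_eq_mul] at h
  rcases le_or_gt x 0 with hx | hx <;> nlinarith

theorem le_one_of_forall_mul_pow_le_one {a b : ℤᵐ⁰} (ha : a ≠ 0) (h : ∀ n : ℕ, a * b ^ n ≤ 1) :
    b ≤ 1 := by
  by_contra! hb
  lift a to ℤ using ha
  lift b to ℤ using (zero_lt_one.trans hb).ne'
  rw [← exp_zero, exp_lt_exp] at hb
  have := h (a.natAbs + 1)
  rw [← exp_nsmul, ← exp_add, ← exp_zero, exp_le_exp, nsmul_eq_mul] at this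
  push_cast at this
  nlinarith [neg_abs_le a, abs_nonneg a]

end WithZero

theorem HenselianRing.exists_pow_eq_one_add {R : Type*} [CommRing R] {I : Ideal R}
    [HenselianRing R I] {q : ℕ} (hq : IsUnit (q : R)) {x : R} (hx : x ∈ I) :
    ∃ w : R, w ^ q = 1 + x := by
  rcases eq_or_ne q 0 with rfl | hq0
  · refine ⟨1, ?_⟩
    have := subsingleton_of_zero_eq_one (isUnit_zero_iff.mp (by simpa using hq))
    exact Subsingleton.elim _ _
  obtain ⟨w, hw, -⟩ := HenselianRing.is_henselian (I := I) (X ^ q - C (1 + x))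
    (monic_X_pow_sub_C _ hq0) 1 (by simpa using I.neg_mem hx)
    (by simpa [derivative_X_pow] using hq.map (Ideal.Quotient.mk I))
  exact ⟨w, by simpa [sub_eq_zero] using hw⟩

theorem IsLocalRing.exists_isUnit_natCast_gt (R : Type*) [CommRing R] [IsLocalRing R] (N : ℕ) :
    ∃ q : ℕ, N < q ∧ IsUnit (q : R) := by
  by_contra! h
  have h₁ : ((N + 1 : ℕ) : R) ∈ maximalIdeal R := h (N + 1) (by omega)
  have h₂ : ((N + 2 : ℕ) : R) ∈ maximalIdeal R := h (N + 2) (by omega)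
  have h₁₂ : ((N + 2 : ℕ) : R) - ((N + 1 : ℕ) : R) = 1 := by push_cast; ring
  exact (mem_maximalIdeal _).mp (h₁₂ ▸ (maximalIdeal R).sub_mem h₂ h₁) isUnit_one

namespace Valuation

variable {R : Type*} [CommRing R] [IsLocalRing R] [HenselianRing R (maximalIdeal R)]
  (v : Valuation R ℤᵐ⁰)

theorem le_one_of_mem_maximalIdeal {x : R} (hx : x ∈ maximalIdeal R) : v x ≤ 1 := by
  by_contra! hvx
  have hvx0 : v x ≠ 0 := (zero_lt_one.trans hvx).ne'
  have hD : 0 < log (v x) := by rwa [← exp_lt_exp, exp_log hvx0, exp_zero]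
  obtain ⟨q, hq, hqu⟩ := exists_isUnit_natCast_gt R (log (v x)).toNat
  obtain ⟨w, hw⟩ := HenselianRing.exists_pow_eq_one_add hqu hx
  apply pow_ne_exp_of_pos_of_lt (q := q) hD (by omega) (v w)
  rw [← map_pow, hw, v.map_add_eq_of_lt_right (by rwa [v.map_one]), exp_log hvx0]

theorem le_one_of_mem_maximalIdeal_of_ne_zero {s : R} (hs : s ∈ maximalIdeal R) (hvs : v s ≠ 0)
    (r : R) : v r ≤ 1 :=
  le_one_of_forall_mul_pow_le_one hvs fun n ↦ by
    simpa using v.le_one_of_mem_maximalIdeal (Ideal.mul_mem_right (r ^ n) _ hs)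

end Valuation

theorem stmt_3_general (R : Type*) [CommRing R] [IsDomain R] [IsLocalRing R]
    (hR : ¬ IsField R)
    [IsAdicComplete (IsLocalRing.maximalIdeal R) R]
    (v : Valuation (FractionRing R) (WithZero (Multiplicative ℤ))) :
    ∀ r : R, r ≠ 0 → algebraMap R (FractionRing R) r ∈ v.integer := by
  intro r _
  have hm : maximalIdeal R ≠ ⊥ := fun h ↦ hR (isField_iff_maximalIdeal_eq.mpr h)
  obtain ⟨s, hs, hs0⟩ := (Submodule.ne_bot_iff _).mp hm
  have hvs : v (algebraMap R (FractionRing R) s) ≠ 0 :=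
    v.ne_zero_iff.mpr ((map_ne_zero_iff _ (IsFractionRing.injective R _)).mpr hs0)
  exact (v.comap (algebraMap R _)).le_one_of_mem_maximalIdeal_of_ne_zero hs hvs r

theorem stmt_3 (R : Type*) [CommRing R] [IsDomain R] [IsLocalRing R]
    (hR : ¬ IsField R)
    [IsAdicComplete (IsLocalRing.maximalIdeal R) R]
    (v : Valuation (FractionRing R) (WithZero (Multiplicative ℤ)))
    (hv : Function.Surjective v) :
    ∀ r : R, r ≠ 0 → algebraMap R (FractionRing R) r ∈ v.integer :=
  stmt_3_general R hR v
end

section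
/- Let F be a field that contains a complete discrete valuation ring T as a subring, and let v be any discrete valuation on F. Then the valuation ring of v contains T. -/
/-!
A complete local ring is Henselian, so for every `a` in the maximal ideal the polynomial
`X² - X - a` has a root `r` in the maximal ideal, i.e. `a = r (r - 1)`. If `v a > 1`, the
ultrametric inequality forces `v (r - 1) = v r > 1`, so `v a = (v r)²` with `1 < v r < v a`.
As the value group is `ℤ`, this descent cannot go on forever, hence `v ≤ 1` on the maximal
ideal. Finally, if `v t > 1` for some `t ∈ T`, then for a uniformizer `π` of `T` the value
`v (tⁿ π) = (v t)ⁿ v π` would exceed `1` for large `n`, although `tⁿ π` lies in the maximal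
ideal.
-/

open Polynomial IsLocalRing WithZero

theorem WithZero.le_one_of_forall_pow_mul_le_one {x y : ℤᵐ⁰} (hy : y ≠ 0)
    (h : ∀ n : ℕ, x ^ n * y ≤ 1) : x ≤ 1 := by
  by_contra! hx
  obtain ⟨a, rfl⟩ : ∃ a, exp a = x := ⟨log x, exp_log (zero_lt_one.trans hx).ne'⟩
  obtain ⟨b, rfl⟩ : ∃ b, exp b = y := ⟨log y, exp_log hy⟩
  have ha : 0 < a := by simpa [← exp_zero] using hx
  have hn := h ((-b).toNat + 1)
  rw [← exp_nsmul, ← exp_add, ← exp_zero, exp_le_exp, nsmul_eq_mul] at hn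
  push_cast at hn
  nlinarith [Int.self_le_toNat (-b)]

theorem HenselianRing.exists_mem_maximalIdeal_mul_sub_one_eq {R : Type*} [CommRing R]
    [IsLocalRing R] [HenselianRing R (maximalIdeal R)] {a : R} (ha : a ∈ maximalIdeal R) :
    ∃ r ∈ maximalIdeal R, r * (r - 1) = a := by
  have hmonic : (X ^ 2 - X - C a : R[X]).Monic := by monicity!
  have heval : (X ^ 2 - X - C a : R[X]).eval 0 ∈ maximalIdeal R := by
    simpa using (maximalIdeal R).neg_mem ha
  have hderiv : IsUnit (Ideal.Quotient.mk (maximalIdeal R)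
      ((X ^ 2 - X - C a : R[X]).derivative.eval 0)) := by
    simp
  obtain ⟨r, hroot, hr⟩ := HenselianRing.is_henselian _ hmonic 0 heval hderiv
  refine ⟨r, by simpa using hr, ?_⟩
  simp only [IsRoot, eval_sub, eval_pow, eval_X, eval_C] at hroot
  linear_combination hroot

theorem Valuation.one_lt_and_map_mul_sub_one_eq {R Γ₀ : Type*} [Ring R]
    [LinearOrderedCommGroupWithZero Γ₀] (v : Valuation R Γ₀) {r : R}
    (h : 1 < v (r * (r - 1))) : 1 < v r ∧ v (r * (r - 1)) = v r * v r := by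
  have hr : 1 < v r := by
    by_contra! hr
    have hr' : v (r - 1) ≤ 1 := (v.map_sub r 1).trans (by simpa using hr)
    exact h.not_ge (v.map_mul r (r - 1) ▸ mul_le_one' hr hr')
  refine ⟨hr, ?_⟩
  rw [v.map_mul, v.map_sub_eq_of_lt_left (by rwa [v.map_one])]

theorem Valuation.map_le_one_of_mem_maximalIdeal {R : Type*} [CommRing R] [IsLocalRing R]
    [HenselianRing R (maximalIdeal R)] (v : Valuation R ℤᵐ⁰) {a : R}
    (ha : a ∈ maximalIdeal R) : v a ≤ 1 := by
  suffices bounded : ∀ n : ℕ, ∀ a ∈ maximalIdeal R, v a ≤ exp (n : ℤ) → v a ≤ 1 from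
    bounded (log (v a)).toNat a ha (le_exp_log.trans (exp_le_exp.mpr (Int.self_le_toNat _)))
  intro n
  induction n with
  | zero => simp
  | succ n ih =>
    intro a ha han
    by_contra! ha1
    obtain ⟨r, hrm, rfl⟩ := HenselianRing.exists_mem_maximalIdeal_mul_sub_one_eq ha
    obtain ⟨hr1, hsq⟩ := v.one_lt_and_map_mul_sub_one_eq ha1
    have hlt : v r < v (r * (r - 1)) := by
      simpa [hsq] using mul_lt_mul_of_pos_left hr1 (zero_lt_one.trans hr1)
    have hrn : v r ≤ exp (n : ℤ) := by
      rw [← lt_mul_exp_iff_le exp_ne_zero, ← exp_add]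
      exact_mod_cast hlt.trans_le han
    exact (ih r hrm hrn).not_gt hr1

theorem stmt_4_general (F : Type*) [Field F] (T : Subring F)
    [IsDiscreteValuationRing T]
    [IsAdicComplete (IsLocalRing.maximalIdeal T) T]
    (v : Valuation F (WithZero (Multiplicative ℤ))) :
    ∀ x : F, x ∈ T → x ∈ v.integer := by
  intro x hx
  lift x to T using hx with t
  obtain ⟨π, hπ⟩ := IsDiscreteValuationRing.exists_irreducible T
  have hπ0 : v (π : F) ≠ 0 := v.ne_zero_iff.mpr (by simpa using hπ.ne_zero)
  refine le_one_of_forall_pow_mul_le_one hπ0 fun n => ?_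
  have hmem : t ^ n * π ∈ maximalIdeal T :=
    Ideal.mul_mem_left _ _ ((mem_maximalIdeal _).mpr hπ.not_isUnit)
  simpa using (v.comap T.subtype).map_le_one_of_mem_maximalIdeal hmem

theorem stmt_4 (F : Type*) [Field F] (T : Subring F)
    [IsDiscreteValuationRing T]
    [IsAdicComplete (IsLocalRing.maximalIdeal T) T]
    (v : Valuation F (WithZero (Multiplicative ℤ)))
    (hv : Function.Surjective v) :
    ∀ x : F, x ∈ T → x ∈ v.integer :=
  stmt_4_general F T v
end

section
/- Let R be a Noetherian local ring with maximal ideal m, and let f, t ∈ m be elements such that m is the radical of the ideal (f, t). Assume that for every n ≥ 1 the quotient ring R/(fⁿ) is t-adically complete. Then the canonical ring homomorphism from the m-adic completion of R to the (f)-adic completion of R is an isomorphism; in particular, the (f)-adic completion of R is m-adically complete. -/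
/-!
Some power `mᵏ` lies in `(f) + (t)`, so `m^((k+1)(n+j)) ⊆ (fⁿ) + (tʲ)`. An element of the
`m`-adic completion therefore yields, for each `n`, a `t`-adic Cauchy sequence in `R/(fⁿ)`;
their limits form an element of the `(f)`-adic completion, and `t`-adic separatedness of the
`R/(fⁿ)` makes this inverse to the canonical map. For completeness: an element of the
`(f)`-adic completion whose `n`-th component lies in `mⁿ` differs from an element of `mⁿ` by a
multiple of `fⁿ`, so `mⁿ` times the completion is the kernel of its projection to `R/mⁿ`, and
the bijection identifies the completion with the inverse limit of these quotients.
-/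

/-- The `I`-adic completion of `R`, realized as the subring of compatible sequences in
`∀ n, R ⧸ I ^ n` (the inverse limit of the rings `R ⧸ I ^ n`). -/
def adicCompletionSubring {R : Type*} [CommRing R] (I : Ideal R) :
    Subring (∀ n : ℕ, R ⧸ I ^ n) where
  carrier := {x | ∀ n : ℕ,
    Ideal.Quotient.factor (S := I ^ (n + 1)) (T := I ^ n) (Ideal.pow_le_pow_right (Nat.le_succ n))
      (x (n + 1)) = x n}
  zero_mem' := fun n => by simp
  one_mem' := fun n => by simp
  add_mem' := fun hx hy n => by
    simp only [Pi.add_apply, map_add]; rw [hx n, hy n]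
  neg_mem' := fun hx n => by
    simp only [Pi.neg_apply, map_neg]; rw [hx n]
  mul_mem' := fun hx hy n => by
    simp only [Pi.mul_apply, map_mul]; rw [hx n, hy n]

/-- The canonical ring homomorphism `R → lim_n R/Iⁿ` into the `I`-adic completion. -/
def toAdicCompletionSubring {R : Type*} [CommRing R] (I : Ideal R) :
    R →+* adicCompletionSubring I where
  toFun r := ⟨fun n => Ideal.Quotient.mk (I ^ n) r,
    fun n => by rw [Ideal.Quotient.factor_mk]⟩
  map_one' := rfl
  map_mul' x y := rfl
  map_zero' := rfl
  map_add' x y := rfl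

/-- For ideals `I ≤ J`, the canonical ring homomorphism from the `I`-adic completion to the
`J`-adic completion, induced by the identity map of `R` (which is continuous between the
two adic topologies), given componentwise by the canonical maps `R/Iⁿ → R/Jⁿ`. -/
def adicCompletionSubringMap {R : Type*} [CommRing R] {I J : Ideal R} (h : I ≤ J) :
    adicCompletionSubring I →+* adicCompletionSubring J where
  toFun x := ⟨fun n => Ideal.Quotient.factor (S := I ^ n) (T := J ^ n) (Ideal.pow_right_mono h n) (x.1 n),
    fun n => by
      obtain ⟨r, hr⟩ := Ideal.Quotient.mk_surjective (x.1 (n + 1))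
      have h1 := x.2 n
      rw [← hr] at h1
      rw [Ideal.Quotient.factor_mk] at h1
      show Ideal.Quotient.factor _ (Ideal.Quotient.factor _ (x.1 (n + 1))) =
        Ideal.Quotient.factor _ (x.1 n)
      rw [← hr, ← h1, Ideal.Quotient.factor_mk, Ideal.Quotient.factor_mk,
        Ideal.Quotient.factor_mk]⟩
  map_one' := Subtype.ext (funext fun n => map_one (Ideal.Quotient.factor _))
  map_mul' x y := Subtype.ext (funext fun n => map_mul (Ideal.Quotient.factor _) _ _)
  map_zero' := Subtype.ext (funext fun n => map_zero (Ideal.Quotient.factor _))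
  map_add' x y := Subtype.ext (funext fun n => map_add (Ideal.Quotient.factor _) _ _)

section

variable {R : Type*} [CommRing R]

namespace adicCompletionSubring

variable {I : Ideal R}

theorem factor_apply_of_le (x : adicCompletionSubring I) {n n' : ℕ} (h : n ≤ n') :
    Ideal.Quotient.factor (Ideal.pow_le_pow_right h) (x.1 n') = x.1 n := by
  induction n', h using Nat.le_induction with
  | base => exact congrFun (congrArg DFunLike.coe Ideal.Quotient.factor_eq) _
  | succ n' h ih => rw [← ih, ← x.2 n', Ideal.Quotient.factor_comp_apply]

theorem exists_lift (x : adicCompletionSubring I) :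
    ∃ r : ℕ → R, (∀ n, Ideal.Quotient.mk (I ^ n) (r n) = x.1 n) ∧
      ∀ ⦃n n'⦄, n ≤ n' → r n' - r n ∈ I ^ n := by
  choose r hr using fun n => Ideal.Quotient.mk_surjective (x.1 n)
  refine ⟨r, hr, fun n n' h => ?_⟩
  have hcompat := factor_apply_of_le x h
  rwa [← hr n', Ideal.Quotient.factor_mk, ← hr n, Ideal.Quotient.eq] at hcompat

theorem mk_mem (r : ℕ → R) (hr : ∀ n, r (n + 1) - r n ∈ I ^ n) :
    (fun n => Ideal.Quotient.mk (I ^ n) (r n)) ∈ adicCompletionSubring I := fun n => by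
  simpa only [Ideal.Quotient.factor_mk, Ideal.Quotient.eq] using hr n

def eval (I : Ideal R) (n : ℕ) : adicCompletionSubring I →+* R ⧸ I ^ n :=
  (Pi.evalRingHom _ n).comp (adicCompletionSubring I).subtype

@[simp]
theorem eval_apply (n : ℕ) (x : adicCompletionSubring I) : eval I n x = x.1 n := rfl

end adicCompletionSubring

@[simp]
theorem toAdicCompletionSubring_apply (I : Ideal R) (r : R) (n : ℕ) :
    (toAdicCompletionSubring I r).1 n = Ideal.Quotient.mk (I ^ n) r := rfl

@[simp]
theorem adicCompletionSubringMap_apply {I J : Ideal R} (h : I ≤ J)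
    (x : adicCompletionSubring I) (n : ℕ) :
    (adicCompletionSubringMap h x).1 n =
      Ideal.Quotient.factor (Ideal.pow_right_mono h n) (x.1 n) :=
  rfl

open adicCompletionSubring

theorem exists_eq_pow_mul_of_apply_eq_zero {f : R} {a : adicCompletionSubring (Ideal.span {f})}
    {n : ℕ} (ha : a.1 n = 0) :
    ∃ b : adicCompletionSubring (Ideal.span {f}), a = toAdicCompletionSubring _ (f ^ n) * b := by
  obtain ⟨r, hr, hrc⟩ := exists_lift a
  have hrn : r n ∈ Ideal.span {f ^ n} := by
    rw [← Ideal.span_singleton_pow, ← Ideal.Quotient.eq_zero_iff_mem, hr, ha]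
  obtain ⟨b₀, hb₀⟩ := Ideal.mem_span_singleton'.mp hrn
  choose u hu using fun ℓ => Ideal.mem_span_singleton'.mp
    (Ideal.span_singleton_pow f (n + ℓ) ▸ hrc (Nat.le_add_right (n + ℓ) 1))
  -- `f` may be a zero divisor: `b ℓ` with `f ^ n * b ℓ = r (n + ℓ)` is built by telescoping
  set b : ℕ → R := fun ℓ => b₀ + ∑ j ∈ Finset.range ℓ, u j * f ^ j with hb
  have hb_succ : ∀ ℓ, b (ℓ + 1) - b ℓ = u ℓ * f ^ ℓ := fun ℓ => by
    simp only [hb, Finset.sum_range_succ]; ring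
  have hfb : ∀ ℓ, f ^ n * b ℓ = r (n + ℓ) := by
    intro ℓ
    induction ℓ with
    | zero => simp [hb, ← hb₀, mul_comm]
    | succ ℓ ih => linear_combination f ^ n * hb_succ ℓ + ih + hu ℓ
  refine ⟨⟨_, mk_mem b fun ℓ => ?_⟩, Subtype.ext (funext fun ℓ => ?_)⟩
  · rw [hb_succ, Ideal.span_singleton_pow]
    exact Ideal.mul_mem_left _ _ (Ideal.mem_span_singleton_self _)
  · change a.1 ℓ = Ideal.Quotient.mk _ (f ^ n) * Ideal.Quotient.mk _ (b ℓ)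
    rw [← map_mul, hfb, ← hr, eq_comm, Ideal.Quotient.eq]
    exact hrc (Nat.le_add_left ℓ n)

theorem adicCompletionSubringMap_apply_eq_zero_iff {f : R} {N : Ideal R}
    (h : Ideal.span {f} ≤ N) (x : adicCompletionSubring (Ideal.span {f})) (n : ℕ) :
    (adicCompletionSubringMap h x).1 n = 0 ↔ x ∈ N.map (toAdicCompletionSubring _) ^ n := by
  rw [← Ideal.map_pow]
  constructor
  · intro hx
    obtain ⟨r, hr, -⟩ := exists_lift x
    have hrN : r n ∈ N ^ n := by
      rwa [adicCompletionSubringMap_apply, ← hr, Ideal.Quotient.factor_mk,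
        Ideal.Quotient.eq_zero_iff_mem] at hx
    obtain ⟨b, hb⟩ := exists_eq_pow_mul_of_apply_eq_zero
      (a := x - toAdicCompletionSubring _ (r n)) (n := n) (by simp [hr])
    have hfN : f ^ n ∈ N ^ n := Ideal.pow_mem_pow (h (Ideal.mem_span_singleton_self f)) n
    rw [← sub_add_cancel x (toAdicCompletionSubring _ (r n)), hb]
    exact add_mem (Ideal.mul_mem_right _ _ (Ideal.mem_map_of_mem _ hfN))
      (Ideal.mem_map_of_mem _ hrN)
  · suffices (N ^ n).map (toAdicCompletionSubring _) ≤
        RingHom.ker ((Ideal.Quotient.factor (Ideal.pow_right_mono h n)).comp (eval _ n)) from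
      fun hx => this hx
    rw [Ideal.map_le_iff_le_comap]
    intro r hr
    simpa [Ideal.Quotient.eq_zero_iff_mem] using hr

theorem isAdicComplete_of_bijective {A : Type*} [CommRing A] {J : Ideal A} {M : Ideal R}
    (φ : A →+* adicCompletionSubring M) (hφ : Function.Bijective φ)
    (hker : ∀ n x, (φ x).1 n = 0 ↔ x ∈ J ^ n) : IsAdicComplete J A := by
  have hsmod : ∀ n (x y : A),
      x ≡ y [SMOD (J ^ n • ⊤ : Submodule A A)] ↔ (φ x).1 n = (φ y).1 n := fun n x y => by
    rw [SModEq.sub_mem, smul_eq_mul, Ideal.mul_top, ← hker, map_sub,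
      ← sub_eq_zero (b := (φ y).1 n)]
    rfl
  refine { haus' := fun x hx => hφ.1 ?_, prec' := fun a ha => ?_ }
  · exact Subtype.ext (funext fun n => (hsmod n x 0).1 (hx n))
  · have hcompat : (fun n => (φ (a n)).1 n) ∈ adicCompletionSubring M := fun n => by
      change Ideal.Quotient.factor _ ((φ (a (n + 1))).1 (n + 1)) = (φ (a n)).1 n
      rw [(φ (a (n + 1))).2 n]
      exact ((hsmod n _ _).1 (ha n.le_succ)).symm
    obtain ⟨L, hL⟩ := hφ.2 ⟨_, hcompat⟩
    exact ⟨L, fun n => (hsmod n _ _).2 (by rw [hL])⟩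

section QuotientAdic

variable {K T : Ideal R}

theorem mk_mem_map_pow_smul_top_iff (j : ℕ) (r : R) :
    Ideal.Quotient.mk K r ∈
        (T.map (Ideal.Quotient.mk K) ^ j • ⊤ : Submodule (R ⧸ K) (R ⧸ K)) ↔
      r ∈ T ^ j ⊔ K := by
  rw [smul_eq_mul, Ideal.mul_top, ← Ideal.map_pow, Ideal.mem_quotient_iff_mem_sup]

theorem mem_of_forall_mem_pow_sup [IsHausdorff (T.map (Ideal.Quotient.mk K)) (R ⧸ K)] {r : R}
    (h : ∀ j, r ∈ T ^ j ⊔ K) : r ∈ K := by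
  rw [← Ideal.Quotient.eq_zero_iff_mem]
  exact IsHausdorff.haus' (I := T.map _) _ fun j =>
    SModEq.zero.2 ((mk_mem_map_pow_smul_top_iff j r).2 (h j))

theorem exists_forall_sub_mem_pow_sup [IsPrecomplete (T.map (Ideal.Quotient.mk K)) (R ⧸ K)]
    (s : ℕ → R) (hs : ∀ ⦃j j'⦄, j ≤ j' → s j' - s j ∈ T ^ j ⊔ K) :
    ∃ ρ : R, ∀ j, ρ - s j ∈ T ^ j ⊔ K := by
  obtain ⟨L, hL⟩ := IsPrecomplete.prec' (I := T.map (Ideal.Quotient.mk K))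
    (fun j => Ideal.Quotient.mk K (s j)) fun {j j'} h =>
      (SModEq.sub_mem.2 (by rw [← map_sub, mk_mem_map_pow_smul_top_iff]; exact hs h)).symm
  obtain ⟨ρ, rfl⟩ := Ideal.Quotient.mk_surjective L
  refine ⟨ρ, fun j => ?_⟩
  rw [← mk_mem_map_pow_smul_top_iff, map_sub, ← SModEq.sub_mem]
  exact (hL j).symm

end QuotientAdic

theorem pow_le_pow_sup_pow {I T m : Ideal R} {k : ℕ} (hk : m ^ k ≤ I ⊔ T) (n j : ℕ) :
    m ^ ((k + 1) * (n + j)) ≤ T ^ j ⊔ I ^ n :=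
  calc m ^ ((k + 1) * (n + j)) ≤ (m ^ k) ^ (n + j) := by
        rw [← pow_mul]; exact Ideal.pow_le_pow_right (by gcongr; omega)
    _ ≤ (I ⊔ T) ^ (n + j) := Ideal.pow_right_mono hk _
    _ ≤ I ^ n ⊔ T ^ j := Ideal.sup_pow_add_le_pow_sup_pow
    _ = T ^ j ⊔ I ^ n := sup_comm _ _

section Comparison

variable {I T m : Ideal R} (hIm : I ≤ m) {k : ℕ}
  [∀ n, IsAdicComplete (T.map (Ideal.Quotient.mk (I ^ n))) (R ⧸ I ^ n)]

theorem adicCompletionSubringMap_injective (hk : m ^ k ≤ I ⊔ T) :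
    Function.Injective (adicCompletionSubringMap hIm) := by
  refine (injective_iff_map_eq_zero _).2 fun x hx => Subtype.ext (funext fun n => ?_)
  obtain ⟨r, hr, hrc⟩ := exists_lift x
  have hrm : ∀ N, r N ∈ m ^ N := fun N => by
    have hxN : (adicCompletionSubringMap hIm x).1 N = 0 := by rw [hx]; rfl
    rwa [adicCompletionSubringMap_apply, ← hr, Ideal.Quotient.factor_mk,
      Ideal.Quotient.eq_zero_iff_mem] at hxN
  change x.1 n = 0
  rw [← hr, Ideal.Quotient.eq_zero_iff_mem]
  refine mem_of_forall_mem_pow_sup (T := T) fun j => ?_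
  have hr_sub := sub_mem (pow_le_pow_sup_pow hk n j (hrm _))
    (Ideal.mem_sup_right (hrc (show n ≤ (k + 1) * (n + j) by nlinarith)))
  rwa [sub_sub_cancel] at hr_sub

theorem adicCompletionSubringMap_surjective (hk : m ^ k ≤ I ⊔ T) (hTm : T ≤ m) :
    Function.Surjective (adicCompletionSubringMap hIm) := by
  intro y
  obtain ⟨s, hs, hsc⟩ := exists_lift y
  have hs_cauchy : ∀ n ⦃j j'⦄, j ≤ j' →
      s ((k + 1) * (n + j')) - s ((k + 1) * (n + j)) ∈ T ^ j ⊔ I ^ n :=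
    fun n j j' h => pow_le_pow_sup_pow hk n j (hsc (by gcongr))
  choose ρ hρ using fun n => exists_forall_sub_mem_pow_sup _ (hs_cauchy n)
  have hρ_succ : ∀ n, ρ (n + 1) - ρ n ∈ I ^ n := by
    intro n
    refine mem_of_forall_mem_pow_sup (T := T) fun j => ?_
    have h₁ : ρ (n + 1) - s ((k + 1) * (n + 1 + j)) ∈ T ^ j ⊔ I ^ n :=
      sup_le_sup_left (Ideal.pow_le_pow_right (I := I) n.le_succ) (T ^ j) (hρ (n + 1) j)
    have h₂ : s ((k + 1) * (n + 1 + j)) - s ((k + 1) * (n + j)) ∈ T ^ j ⊔ I ^ n :=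
      pow_le_pow_sup_pow hk n j (hsc (by gcongr; omega))
    have h₃ := add_mem (add_mem h₁ h₂) (neg_mem (hρ n j))
    convert h₃ using 1
    ring
  refine ⟨⟨_, mk_mem ρ hρ_succ⟩, Subtype.ext (funext fun n => ?_)⟩
  change Ideal.Quotient.factor _ (Ideal.Quotient.mk _ (ρ n)) = y.1 n
  rw [Ideal.Quotient.factor_mk, ← hs, Ideal.Quotient.eq]
  have hTI : T ^ n ⊔ I ^ n ≤ m ^ n :=
    sup_le (Ideal.pow_right_mono hTm n) (Ideal.pow_right_mono hIm n)
  have h := add_mem (hTI (hρ n n)) (hsc (show n ≤ (k + 1) * (n + n) by nlinarith))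
  rwa [sub_add_sub_cancel] at h

end Comparison

end

theorem stmt_6_general (R : Type*) [CommRing R] [IsNoetherianRing R] [IsLocalRing R]
    (f t : R) (ht : t ∈ IsLocalRing.maximalIdeal R)
    (hrad : (Ideal.span {f, t}).radical = IsLocalRing.maximalIdeal R)
    (hcompl : ∀ n : ℕ, 1 ≤ n →
      IsAdicComplete (Ideal.span {Ideal.Quotient.mk (Ideal.span {f} ^ n) t})
        (R ⧸ Ideal.span {f} ^ n))
    (hfm : Ideal.span {f} ≤ IsLocalRing.maximalIdeal R) :
    -- the canonical homomorphism between the (f)-adic and the m-adic completions of R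
    -- is an isomorphism, ...
    Function.Bijective (adicCompletionSubringMap hfm) ∧
    -- ... and in particular the (f)-adic completion of R is m-adically complete.
    IsAdicComplete
      (Ideal.map (toAdicCompletionSubring (Ideal.span {f})) (IsLocalRing.maximalIdeal R))
      (adicCompletionSubring (Ideal.span {f})) := by
  obtain ⟨k, hk⟩ := Ideal.exists_radical_pow_le_of_fg (Ideal.span {f, t})
    (hrad ▸ IsNoetherian.noetherian (IsLocalRing.maximalIdeal R))
  rw [hrad, Ideal.span_insert] at hk
  have : ∀ n, IsAdicComplete ((Ideal.span {t}).map (Ideal.Quotient.mk (Ideal.span {f} ^ n)))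
      (R ⧸ Ideal.span {f} ^ n) := by
    intro n
    rw [Ideal.map_span, Set.image_singleton]
    rcases n.eq_zero_or_pos with rfl | hn
    · have : Subsingleton (R ⧸ Ideal.span {f} ^ 0) :=
        Ideal.Quotient.subsingleton_iff.2 (by rw [pow_zero, Ideal.one_eq_top])
      infer_instance
    · exact hcompl n hn
  have hTm : Ideal.span {t} ≤ IsLocalRing.maximalIdeal R := Ideal.span_le.2 (by simpa using ht)
  have hbij : Function.Bijective (adicCompletionSubringMap hfm) :=
    ⟨adicCompletionSubringMap_injective hfm hk, adicCompletionSubringMap_surjective hfm hk hTm⟩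
  exact ⟨hbij, isAdicComplete_of_bijective _ hbij fun n x =>
    adicCompletionSubringMap_apply_eq_zero_iff hfm x n⟩

theorem stmt_6 (R : Type*) [CommRing R] [IsNoetherianRing R] [IsLocalRing R]
    (f t : R) (hf : f ∈ IsLocalRing.maximalIdeal R) (ht : t ∈ IsLocalRing.maximalIdeal R)
    (hrad : (Ideal.span {f, t}).radical = IsLocalRing.maximalIdeal R)
    (hcompl : ∀ n : ℕ, 1 ≤ n →
      IsAdicComplete (Ideal.span {Ideal.Quotient.mk (Ideal.span {f} ^ n) t})
        (R ⧸ Ideal.span {f} ^ n))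
    (hfm : Ideal.span {f} ≤ IsLocalRing.maximalIdeal R) :
    -- the canonical homomorphism between the (f)-adic and the m-adic completions of R
    -- is an isomorphism, ...
    Function.Bijective (adicCompletionSubringMap hfm) ∧
    -- ... and in particular the (f)-adic completion of R is m-adically complete.
    IsAdicComplete
      (Ideal.map (toAdicCompletionSubring (Ideal.span {f})) (IsLocalRing.maximalIdeal R))
      (adicCompletionSubring (Ideal.span {f})) :=
  stmt_6_general R f t ht hrad hcompl hfm
end

section
/- Let R be a Noetherian local domain of Krull dimension two that is complete with respect to its maximal ideal, whose maximal ideal is generated by two elements x and y (so R is a two-dimensional complete regular local ring), and whose residue field has characteristic different from 2. Let E be the fraction field of R, let v_y be the discrete valuation on E whose valuation ring is the localization of R at the height-one prime ideal (y) (the order of vanishing along y), and let E_y be the completion of E with respect to v_y. Let q = Σ_{i=1}^n a_i Z_i² be a diagonal quadratic form over E such that each coefficient a_i has the form a_i = x^{r_i} y^{s_i} u_i for some integers r_i, s_i ≥ 0 and some unit u_i ∈ R^×. If q is isotropic over E_y, then q is isotropic over E. -/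
/-!
Write `aᵢ = y^δᵢ x^εᵢ uᵢ dᵢ²` with `δᵢ, εᵢ ∈ {0, 1}` and absorb the squares `dᵢ²`. A zero over
`E_y`, scaled to be unimodular, approximated modulo `y²` by elements of `R_(y)` and cleared of
denominators, gives `P ∈ Rⁿ` with some `Pⱼ ∉ (y)` and `Σ y^δᵢ x^εᵢ uᵢ Pᵢ² ≡ 0 mod y²`.
Springer's parity argument then yields a class `δᵢ = δ₀` whose form `Σ x^εᵢ uᵢ Zᵢ²` has such a
zero modulo `y`. In the domain `R/(y)`, whose maximal ideal is generated by `x`, the same argument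
with `x` in place of `y` yields a class `εᵢ = ε₀` whose unit form `Σ uᵢ Zᵢ²` has a zero modulo
`(x, y)` with a unit coordinate. Since `R` is complete and `2` is a unit, Hensel's lemma lifts it
to an exact zero in `R`, which is supported on a single class and hence an isotropic vector of `q`.
-/

/-- `(Fv, ι, w)` is the completion of the valued field `(F, v)`:  `w` extends `v` along
`ι`, the image of `F` is dense in `Fv`, and `Fv` is complete. -/
def IsValuationCompletion {F Fv : Type*} [Field F] [Field Fv]
    (v : Valuation F (WithZero (Multiplicative ℤ))) (ι : F →+* Fv)
    (w : Valuation Fv (WithZero (Multiplicative ℤ))) : Prop :=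
  (∀ a : F, w (ι a) = v a) ∧
  (∀ x : Fv, ∀ γ : WithZero (Multiplicative ℤ), γ ≠ 0 → ∃ a : F, w (x - ι a) < γ) ∧
  (∀ s : ℕ → Fv,
    (∀ γ : WithZero (Multiplicative ℤ), γ ≠ 0 →
      ∃ N : ℕ, ∀ m ≥ N, ∀ n ≥ N, w (s m - s n) < γ) →
    ∃ l : Fv, ∀ γ : WithZero (Multiplicative ℤ), γ ≠ 0 →
      ∃ N : ℕ, ∀ n ≥ N, w (l - s n) < γ)

open IsLocalRing Polynomial

section LocalRing

variable {R : Type*} [CommRing R] [IsNoetherianRing R] [IsLocalRing R]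

theorem maximalIdeal_ne_span_singleton (hdim : 1 < ringKrullDim R) (g : R) :
    maximalIdeal R ≠ Ideal.span {g} := by
  intro h
  have hle : ringKrullDim R ≤ 1 := by
    refine (ringKrullDim_le_spanFinrank_maximalIdeal R).trans ?_
    rw [h]
    exact_mod_cast (Submodule.spanFinrank_span_le_ncard_of_finite (Set.finite_singleton g)).trans
      (Set.ncard_singleton g).le
  exact hle.not_gt hdim

variable {x y : R}

theorem notMem_span_singleton_of_maximalIdeal_eq_span_pair (hdim : 1 < ringKrullDim R)
    (hxy : maximalIdeal R = Ideal.span {x, y}) : x ∉ Ideal.span {y} := by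
  intro hx
  refine maximalIdeal_ne_span_singleton hdim y ?_
  rw [hxy, Ideal.span_insert, sup_eq_right.2 (Ideal.span_singleton_le_iff_mem _ |>.2 hx)]

theorem ne_zero_of_maximalIdeal_eq_span_pair (hdim : 1 < ringKrullDim R)
    (hxy : maximalIdeal R = Ideal.span {x, y}) : y ≠ 0 := by
  rintro rfl
  refine maximalIdeal_ne_span_singleton hdim x ?_
  rw [hxy, Set.pair_comm, Ideal.span_insert_zero]

end LocalRing

section Localization

variable {R K Γ₀ : Type*} [CommRing R] [Field K] [Algebra R K] [LinearOrderedCommGroupWithZero Γ₀]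

def IsValuationOfLocalizationAt (v : Valuation K Γ₀) (y : R) : Prop :=
  ∀ e : K, v e ≤ 1 ↔ ∃ p q : R, q ∉ Ideal.span {y} ∧ algebraMap R K q * e = algebraMap R K p

namespace IsValuationOfLocalizationAt

variable {v : Valuation K Γ₀} {y : R}

theorem span_singleton_ne_top (hv : IsValuationOfLocalizationAt v y) : Ideal.span {y} ≠ ⊤ := by
  obtain ⟨-, q, hq, -⟩ := (hv 0).1 (by simp)
  exact fun h => hq (h ▸ Submodule.mem_top)

theorem valuation_algebraMap_le_one (hv : IsValuationOfLocalizationAt v y) (r : R) :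
    v (algebraMap R K r) ≤ 1 :=
  (hv _).2 ⟨r, 1, (Ideal.ne_top_iff_one _).1 hv.span_singleton_ne_top, by simp⟩

variable [IsFractionRing R K]

theorem valuation_algebraMap_eq_one (hv : IsValuationOfLocalizationAt v y) {r : R}
    (hr : r ∉ Ideal.span {y}) : v (algebraMap R K r) = 1 := by
  have hr0 : algebraMap R K r ≠ 0 := by
    rw [ne_eq, IsFractionRing.to_map_eq_zero_iff]
    exact fun h => hr (h ▸ Ideal.zero_mem _)
  have hinv : v (algebraMap R K r)⁻¹ ≤ 1 :=
    (hv _).2 ⟨1, r, hr, by rw [mul_inv_cancel₀ hr0, map_one]⟩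
  rw [map_inv₀, inv_le_one₀ (zero_lt_iff.2 (v.ne_zero_iff.2 hr0))] at hinv
  exact (hv.valuation_algebraMap_le_one r).antisymm hinv

theorem valuation_algebraMap_self_lt_one (hv : IsValuationOfLocalizationAt v y) :
    v (algebraMap R K y) < 1 := by
  refine (hv.valuation_algebraMap_le_one y).lt_of_ne fun h => ?_
  have hy : algebraMap R K y ≠ 0 := fun h0 => by simp [h0] at h
  obtain ⟨p, q, hq, hqp⟩ := (hv _).1 (show v (algebraMap R K y)⁻¹ ≤ 1 by simp [h])
  refine hq (Ideal.mem_span_singleton'.2 ⟨p, IsFractionRing.injective R K ?_⟩)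
  rw [map_mul, ← hqp, inv_mul_cancel_right₀ hy]

theorem valuation_algebraMap_lt_one_iff (hv : IsValuationOfLocalizationAt v y) {r : R} :
    v (algebraMap R K r) < 1 ↔ r ∈ Ideal.span {y} := by
  refine ⟨fun h => by_contra fun hr => (hv.valuation_algebraMap_eq_one hr ▸ h).false, fun hr => ?_⟩
  obtain ⟨t, rfl⟩ := Ideal.mem_span_singleton'.1 hr
  rw [map_mul, map_mul]
  exact (mul_le_of_le_one_left' (hv.valuation_algebraMap_le_one t)).trans_lt
    hv.valuation_algebraMap_self_lt_one

theorem isPrime_span_singleton (hv : IsValuationOfLocalizationAt v y) :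
    (Ideal.span {y}).IsPrime := by
  refine ⟨hv.span_singleton_ne_top, fun {r t} h => ?_⟩
  simp only [← hv.valuation_algebraMap_lt_one_iff, map_mul] at h ⊢
  by_contra! hrt
  exact h.not_ge (one_le_mul hrt.1 hrt.2)

theorem pow_dvd_of_valuation_le (hv : IsValuationOfLocalizationAt v y) (hy : y ≠ 0) {r : R}
    {k : ℕ} (h : v (algebraMap R K r) ≤ v (algebraMap R K y) ^ k) : y ^ k ∣ r := by
  induction k generalizing r with
  | zero => exact pow_zero y ▸ one_dvd r
  | succ k ih =>
    have hlt : v (algebraMap R K r) < 1 :=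
      h.trans_lt (pow_lt_one' hv.valuation_algebraMap_self_lt_one k.succ_ne_zero)
    obtain ⟨t, rfl⟩ := Ideal.mem_span_singleton.1 (hv.valuation_algebraMap_lt_one_iff.1 hlt)
    have hy0 : 0 < v (algebraMap R K y) := by
      rw [zero_lt_iff, v.ne_zero_iff, ne_eq, IsFractionRing.to_map_eq_zero_iff]
      exact hy
    rw [map_mul, map_mul, pow_succ'] at h
    rw [pow_succ']
    exact mul_dvd_mul_left y (ih (le_of_mul_le_mul_left h hy0))

theorem exists_common_denominator (hv : IsValuationOfLocalizationAt v y) {ι : Type*} [Fintype ι]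
    {e : ι → K} (he : ∀ i, v (e i) ≤ 1) :
    ∃ Q : R, Q ∉ Ideal.span {y} ∧
      ∃ P : ι → R, ∀ i, algebraMap R K (P i) = algebraMap R K Q * e i := by
  classical
  choose p q hq hqp using fun i => (hv (e i)).1 (he i)
  have := hv.isPrime_span_singleton
  refine ⟨∏ i, q i, fun h => ?_, fun i => (∏ l ∈ Finset.univ.erase i, q l) * p i, fun i => ?_⟩
  · obtain ⟨i, -, hi⟩ := Ideal.IsPrime.prod_mem_iff.1 h
    exact hq i hi
  · rw [map_mul, ← hqp i, ← mul_assoc, ← map_mul, Finset.prod_erase_mul _ _ (Finset.mem_univ i)]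

end IsValuationOfLocalizationAt

end Localization

section Completion

variable {K L Γ₀ ι : Type*} [Field K] [Field L] [LinearOrderedCommGroupWithZero Γ₀] [Fintype ι]

theorem Valuation.exists_unimodular_of_sum_mul_sq_eq_zero (w : Valuation L Γ₀) {c ζ : ι → L}
    (hζ : ζ ≠ 0) (h : ∑ i, c i * ζ i ^ 2 = 0) :
    ∃ ξ : ι → L, (∀ i, w (ξ i) ≤ 1) ∧ (∃ j, ξ j = 1) ∧ ∑ i, c i * ξ i ^ 2 = 0 := by
  have : Nonempty ι := by
    obtain ⟨i, -⟩ := Function.ne_iff.1 hζ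
    exact ⟨i⟩
  obtain ⟨j, hj⟩ := Finite.exists_max fun i => w (ζ i)
  have hζj : ζ j ≠ 0 := by
    intro h0
    refine hζ (funext fun i => ?_)
    simpa [h0] using hj i
  refine ⟨fun i => ζ i / ζ j, fun i => ?_, ⟨j, div_self hζj⟩, ?_⟩
  · rw [map_div₀, div_le_one₀ (zero_lt_iff.2 (w.ne_zero_iff.2 hζj))]
    exact hj i
  · simp only [div_pow, ← mul_div_assoc, ← Finset.sum_div, h, zero_div]

theorem exists_approx_isotropic_of_dense (v : Valuation K Γ₀) (f : K →+* L)
    (w : Valuation L Γ₀) (hwv : ∀ a, w (f a) = v a)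
    (hdense : ∀ x : L, ∀ γ : Γ₀, γ ≠ 0 → ∃ a, w (x - f a) < γ)
    {b : ι → K} (hb : ∀ i, v (b i) ≤ 1) {ξ : ι → L} (hξ : ∀ i, w (ξ i) ≤ 1) {j : ι}
    (hj : ξ j = 1) (h : ∑ i, f (b i) * ξ i ^ 2 = 0) {γ : Γ₀} (hγ0 : γ ≠ 0) (hγ1 : γ ≤ 1) :
    ∃ e : ι → K, (∀ i, v (e i) ≤ 1) ∧ v (e j) = 1 ∧ v (∑ i, b i * e i ^ 2) < γ := by
  choose e he using fun i => hdense (ξ i) γ hγ0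
  have hclose : ∀ i, w (f (e i) - ξ i) < γ := fun i => w.map_sub_swap _ _ ▸ he i
  have hfe : ∀ i, f (e i) = ξ i + (f (e i) - ξ i) := fun i => (add_sub_cancel _ _).symm
  have he1 : ∀ i, v (e i) ≤ 1 := fun i => by
    rw [← hwv, hfe]
    exact w.map_add_le (hξ i) ((hclose i).le.trans hγ1)
  refine ⟨e, he1, ?_, ?_⟩
  · have hlt : w (f (e j) - ξ j) < w (ξ j) := (hclose j).trans_le (by rwa [hj, map_one])
    rw [← hwv, hfe, w.map_add_eq_of_lt_left hlt, hj, map_one]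
  · have hsum : f (∑ i, b i * e i ^ 2) =
        ∑ i, f (b i) * ((f (e i) - ξ i) * (f (e i) + ξ i)) := by
      rw [← sub_zero (f _), ← h, map_sum, ← Finset.sum_sub_distrib]
      exact Finset.sum_congr rfl fun i _ => by rw [map_mul, map_pow]; ring
    rw [← hwv, hsum]
    refine w.map_sum_lt hγ0 fun i _ => ?_
    rw [map_mul, map_mul]
    refine lt_of_le_of_lt ?_ (hclose i)
    refine (mul_le_of_le_one_left' ?_).trans (mul_le_of_le_one_right' ?_)
    · exact (hwv _).trans_le (hb i)
    · exact w.map_add_le ((hwv _).trans_le (he1 i)) (hξ i)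

end Completion

namespace IsValuationOfLocalizationAt

variable {R K L Γ₀ ι : Type*} [CommRing R] [Field K] [Algebra R K] [IsFractionRing R K] [Field L]
  [LinearOrderedCommGroupWithZero Γ₀] [Fintype ι] {v : Valuation K Γ₀} {y : R}

theorem exists_primitive_sq_dvd_sum (hv : IsValuationOfLocalizationAt v y) (hy : y ≠ 0)
    (f : K →+* L) (w : Valuation L Γ₀) (hwv : ∀ a, w (f a) = v a)
    (hdense : ∀ x : L, ∀ γ : Γ₀, γ ≠ 0 → ∃ a, w (x - f a) < γ)
    {b : ι → R} {ζ : ι → L} (hζ : ζ ≠ 0) (h : ∑ i, f (algebraMap R K (b i)) * ζ i ^ 2 = 0) :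
    ∃ P : ι → R, (∃ j, ¬y ∣ P j) ∧ y ^ 2 ∣ ∑ i, b i * P i ^ 2 := by
  obtain ⟨ξ, hξ1, ⟨j, hj⟩, hξ⟩ := w.exists_unimodular_of_sum_mul_sq_eq_zero hζ h
  have hπ : v (algebraMap R K y) ≠ 0 := by
    rw [v.ne_zero_iff, ne_eq, IsFractionRing.to_map_eq_zero_iff]
    exact hy
  obtain ⟨e, he1, hej, hsmall⟩ := exists_approx_isotropic_of_dense v f w hwv hdense
    (fun i => hv.valuation_algebraMap_le_one (b i)) hξ1 hj hξ (pow_ne_zero 2 hπ)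
    (pow_le_one₀ zero_le (hv.valuation_algebraMap_le_one y))
  obtain ⟨Q, hQ, P, hP⟩ := hv.exists_common_denominator he1
  refine ⟨P, ⟨j, fun hPj => ?_⟩, hv.pow_dvd_of_valuation_le hy ?_⟩
  · refine (hv.valuation_algebraMap_lt_one_iff.2 (Ideal.mem_span_singleton.2 hPj)).ne ?_
    rw [hP, map_mul, hv.valuation_algebraMap_eq_one hQ, hej, one_mul]
  · have hsum : algebraMap R K (∑ i, b i * P i ^ 2) =
        algebraMap R K Q ^ 2 * ∑ i, algebraMap R K (b i) * e i ^ 2 := by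
      simp only [map_sum, map_mul, map_pow, hP, Finset.mul_sum]
      exact Finset.sum_congr rfl fun i _ => by ring
    rw [hsum, map_mul, map_pow, hv.valuation_algebraMap_eq_one hQ, one_pow, one_mul]
    exact hsmall.le

end IsValuationOfLocalizationAt

section Springer

variable {A ι : Type*} [CommRing A] [IsDomain A]

theorem exists_class_dvd_sum_of_sq_dvd_sum {π : A} (hπ : π ≠ 0) {s : Finset ι} {δ : ι → ℕ}
    (hδ : ∀ i ∈ s, δ i ≤ 1) {f p : ι → A} (h : π ^ 2 ∣ ∑ i ∈ s, π ^ δ i * f i * p i ^ 2)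
    {j : ι} (hj : j ∈ s) (hpj : ¬π ∣ p j) :
    ∃ d, ∃ j' ∈ s, δ j' = d ∧ ¬π ∣ p j' ∧ π ∣ ∑ i ∈ s with δ i = d, f i * p i ^ 2 := by
  classical
  have hsplit : ∑ i ∈ s, π ^ δ i * f i * p i ^ 2 =
      ∑ i ∈ s with δ i = 0, f i * p i ^ 2 + π * ∑ i ∈ s with δ i = 1, f i * p i ^ 2 := by
    rw [← Finset.sum_filter_add_sum_filter_not s (fun i => δ i = 0), Finset.mul_sum,
      Finset.filter_congr fun i hi => (show ¬δ i = 0 ↔ δ i = 1 by have := hδ i hi; omega)]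
    congr 1 <;> refine Finset.sum_congr rfl fun i hi => ?_ <;>
      rw [(Finset.mem_filter.1 hi).2] <;> ring
  by_cases h0 : ∃ i ∈ s, δ i = 0 ∧ ¬π ∣ p i
  · obtain ⟨i, hi, hi0, hpi⟩ := h0
    refine ⟨0, i, hi, hi0, hpi, ?_⟩
    have := (dvd_pow_self π two_ne_zero).trans h
    rw [hsplit] at this
    exact (dvd_add_left (dvd_mul_right π _)).1 this
  · push Not at h0
    have hδj : δ j = 1 := by
      have := hδ j hj
      have : δ j ≠ 0 := fun h => hpj (h0 j hj h)
      omega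
    refine ⟨1, j, hj, hδj, hpj, ?_⟩
    have hA : π ^ 2 ∣ ∑ i ∈ s with δ i = 0, f i * p i ^ 2 := Finset.dvd_sum fun i hi => by
      obtain ⟨t, ht⟩ := h0 i (Finset.mem_filter.1 hi).1 (Finset.mem_filter.1 hi).2
      exact Dvd.intro (f i * t ^ 2) (by rw [ht]; ring)
    rw [hsplit, dvd_add_right hA, sq] at h
    exact (mul_dvd_mul_iff_left hπ).1 h

theorem exists_eq_pow_mul_not_dvd [WfDvdMonoid A] {g : A} (hg : ¬IsUnit g) {s : Finset ι}
    {p : ι → A} {j : ι} (hj : j ∈ s) (hpj : p j ≠ 0) :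
    ∃ (m : ℕ) (c : ι → A), (∀ i ∈ s, p i = g ^ m * c i) ∧ ∃ j' ∈ s, ¬g ∣ c j' := by
  classical
  have hex : ∃ m, ∃ i ∈ s, ¬g ^ (m + 1) ∣ p i := by
    obtain ⟨m, hm⟩ := FiniteMultiplicity.of_not_isUnit hg hpj
    exact ⟨m, j, hj, hm⟩
  obtain ⟨j', hj', hndvd⟩ := Nat.find_spec hex
  have hdvd : ∀ i ∈ s, g ^ Nat.find hex ∣ p i := by
    intro i hi
    rcases hm : Nat.find hex with _ | k
    · exact pow_zero g ▸ one_dvd _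
    · have := Nat.find_min hex (show k < Nat.find hex by omega)
      push Not at this
      exact this i hi
  choose! c hc using hdvd
  refine ⟨Nat.find hex, c, hc, j', hj', fun hgc => hndvd ?_⟩
  rw [hc j' hj', pow_succ]
  exact mul_dvd_mul_left _ hgc

end Springer

section ResidueForm

variable {R ι : Type*} [CommRing R] [IsLocalRing R] {x y : R}

theorem mem_maximalIdeal_iff_mk_dvd (hxy : maximalIdeal R = Ideal.span {x, y}) (z : R) :
    z ∈ maximalIdeal R ↔
      Ideal.Quotient.mk (Ideal.span {y}) x ∣ Ideal.Quotient.mk (Ideal.span {y}) z := by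
  have hle : Ideal.span {y} ≤ maximalIdeal R := hxy ▸ Ideal.span_mono (by simp)
  rw [← Ideal.mem_quotient_iff_mem hle, ← Ideal.mem_span_singleton, hxy, Ideal.map_span,
    Set.image_pair, Ideal.Quotient.mk_singleton_self, Set.pair_comm, Ideal.span_insert_zero]

theorem exists_class_residue_zero_of_dvd_sum [IsNoetherianRing R]
    (hxy : maximalIdeal R = Ideal.span {x, y}) (hy : (Ideal.span {y}).IsPrime)
    (hx : x ∉ Ideal.span {y}) {s : Finset ι} {ε : ι → ℕ} (hε : ∀ i ∈ s, ε i ≤ 1) (u : ι → Rˣ)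
    {P : ι → R} (h : y ∣ ∑ i ∈ s, x ^ ε i * u i * P i ^ 2) {j : ι} (hj : j ∈ s)
    (hPj : ¬y ∣ P j) :
    ∃ e, ∃ c : ι → R, ∃ j' ∈ s, ε j' = e ∧ c j' ∉ maximalIdeal R ∧
      ∑ i ∈ s with ε i = e, u i * c i ^ 2 ∈ maximalIdeal R := by
  classical
  set mk := Ideal.Quotient.mk (Ideal.span {y})
  have hmk0 : ∀ z, mk z = 0 ↔ y ∣ z := fun z => by
    rw [Ideal.Quotient.eq_zero_iff_mem, Ideal.mem_span_singleton]
  have hX0 : mk x ≠ 0 := by rwa [ne_eq, Ideal.Quotient.eq_zero_iff_mem]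
  have hX : ¬IsUnit (mk x) := by
    rw [isUnit_iff_dvd_one, ← map_one mk, ← mem_maximalIdeal_iff_mk_dvd hxy]
    exact notMem_maximalIdeal.2 isUnit_one
  obtain ⟨m, cb, hcb, j₁, hj₁, hcbj₁⟩ :=
    exists_eq_pow_mul_not_dvd hX (p := fun i => mk (P i)) hj (by rwa [ne_eq, hmk0])
  have hsum : ∑ i ∈ s, mk x ^ ε i * mk (u i) * cb i ^ 2 = 0 := by
    have hmk : mk (∑ i ∈ s, x ^ ε i * u i * P i ^ 2) =
        (mk x ^ m) ^ 2 * ∑ i ∈ s, mk x ^ ε i * mk (u i) * cb i ^ 2 := by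
      rw [map_sum, Finset.mul_sum]
      refine Finset.sum_congr rfl fun i hi => ?_
      rw [map_mul, map_mul, map_pow, map_pow, hcb i hi]
      ring
    rw [(hmk0 _).2 h, eq_comm] at hmk
    exact (mul_eq_zero.1 hmk).resolve_left (pow_ne_zero _ (pow_ne_zero _ hX0))
  obtain ⟨e, j', hj', hj'e, hcj', hdvd⟩ :=
    exists_class_dvd_sum_of_sq_dvd_sum hX0 hε (hsum ▸ dvd_zero _) hj₁ hcbj₁
  choose c hc using fun i => Ideal.Quotient.mk_surjective (cb i)
  refine ⟨e, c, j', hj', hj'e, ?_, ?_⟩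
  · rwa [mem_maximalIdeal_iff_mk_dvd hxy, hc]
  · rw [mem_maximalIdeal_iff_mk_dvd hxy, map_sum]
    simpa [hc] using hdvd

end ResidueForm

section Hensel

variable {R ι : Type*} [CommRing R] [IsLocalRing R] [HenselianRing R (maximalIdeal R)]

theorem exists_mul_sq_add_eq_zero_of_mem_maximalIdeal (h2 : IsUnit (2 : R)) (u : Rˣ) {b C : R}
    (hb : b ∉ maximalIdeal R) (h : u * b ^ 2 + C ∈ maximalIdeal R) :
    ∃ α, α ∉ maximalIdeal R ∧ u * α ^ 2 + C = 0 := by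
  set f : R[X] := X ^ 2 + Polynomial.C (↑u⁻¹ * C)
  have hf : ∀ t, u * f.eval t = u * t ^ 2 + C := fun t => by
    simp only [f, eval_add, eval_pow, eval_X, eval_C, mul_add, Units.mul_inv_cancel_left]
  have hfb : f.eval b ∈ maximalIdeal R := by
    rw [← Units.inv_mul_cancel_left u (f.eval b), hf]
    exact Ideal.mul_mem_left _ _ h
  have hf'b : IsUnit (Ideal.Quotient.mk (maximalIdeal R) (f.derivative.eval b)) := by
    refine IsUnit.map _ ?_
    rw [show f.derivative.eval b = 2 * b by simp [f]; ring]
    exact h2.mul (notMem_maximalIdeal.1 hb)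
  obtain ⟨α, hα, hαb⟩ := HenselianRing.is_henselian f (monic_X_pow_add_C _ two_ne_zero) b hfb hf'b
  refine ⟨α, fun hα' => hb ?_, ?_⟩
  · simpa using sub_mem hα' hαb
  · rw [← hf, hα.eq_zero, mul_zero]

theorem exists_sum_mul_sq_eq_zero_of_mem_maximalIdeal (h2 : IsUnit (2 : R)) (u : ι → Rˣ)
    {s : Finset ι} {c : ι → R} {j : ι} (hj : j ∈ s) (hcj : c j ∉ maximalIdeal R)
    (h : ∑ i ∈ s, u i * c i ^ 2 ∈ maximalIdeal R) :
    ∃ c' : ι → R, c' j ≠ 0 ∧ ∑ i ∈ s, u i * c' i ^ 2 = 0 := by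
  classical
  rw [← Finset.add_sum_erase s _ hj] at h
  obtain ⟨α, hα, hαC⟩ := exists_mul_sq_add_eq_zero_of_mem_maximalIdeal h2 (u j) hcj h
  refine ⟨Function.update c j α, ?_, ?_⟩
  · rw [Function.update_self]
    exact fun h0 => hα (h0 ▸ Ideal.zero_mem _)
  · rw [← Finset.add_sum_erase s _ hj, Function.update_self, ← hαC]
    congr 1
    exact Finset.sum_congr rfl fun i hi => by
      rw [Function.update_of_ne (Finset.ne_of_mem_erase hi)]

end Hensel

theorem pow_mul_pow_mul_eq_mod_two_mul_sq {R : Type*} [CommMonoid R] (x y u : R) (r s : ℕ) :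
    x ^ r * y ^ s * u = y ^ (s % 2) * (x ^ (r % 2) * u) * (x ^ (r / 2) * y ^ (s / 2)) ^ 2 := by
  conv_lhs => rw [← Nat.mod_add_div' r 2, ← Nat.mod_add_div' s 2]
  simp only [pow_add, pow_mul, mul_pow]
  ac_rfl

section DiagonalForm

variable {K ι : Type*} [Field K] [Fintype ι]

theorem exists_sum_mul_sq_eq_zero_of_eq_mul_sq {a b d z : ι → K}
    (hab : ∀ i, a i = b i * d i ^ 2) (hd : ∀ i, d i ≠ 0) (hz : z ≠ 0)
    (h : ∑ i, a i * z i ^ 2 = 0) : ∃ ζ : ι → K, ζ ≠ 0 ∧ ∑ i, b i * ζ i ^ 2 = 0 := by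
  refine ⟨fun i => d i * z i, fun h0 => hz (funext fun i => ?_), ?_⟩
  · exact (mul_eq_zero.1 (congrFun h0 i)).resolve_left (hd i)
  · simp_rw [mul_pow, ← mul_assoc, ← hab]
    exact h

theorem exists_sum_mul_sq_eq_zero_of_subform {a u d c : ι → K} {s : Finset ι} {g : K}
    (had : ∀ i ∈ s, a i = g * u i * d i ^ 2) (hd : ∀ i ∈ s, d i ≠ 0) {j : ι} (hj : j ∈ s)
    (hcj : c j ≠ 0) (h : ∑ i ∈ s, u i * c i ^ 2 = 0) :
    ∃ z : ι → K, z ≠ 0 ∧ ∑ i, a i * z i ^ 2 = 0 := by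
  classical
  refine ⟨fun i => if i ∈ s then c i / d i else 0, fun h0 => ?_, ?_⟩
  · simpa [hj, hcj, hd j hj] using congrFun h0 j
  · rw [← Finset.sum_subset (Finset.subset_univ s) fun i _ hi => by simp [hi]]
    calc ∑ i ∈ s, a i * (if i ∈ s then c i / d i else 0) ^ 2
        = g * ∑ i ∈ s, u i * c i ^ 2 := by
          rw [Finset.mul_sum]
          refine Finset.sum_congr rfl fun i hi => ?_
          rw [if_pos hi, had i hi]
          field_simp [hd i hi]
      _ = 0 := by rw [h, mul_zero]

end DiagonalForm

theorem stmt_7_general (R : Type*) [CommRing R] [IsDomain R] [IsNoetherianRing R] [IsLocalRing R]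
    [IsAdicComplete (IsLocalRing.maximalIdeal R) R]
    (x y : R) (hxy : IsLocalRing.maximalIdeal R = Ideal.span {x, y})
    (hdim : ringKrullDim R = 2)
    (hchar : ringChar (IsLocalRing.ResidueField R) ≠ 2)
    -- v is the discrete valuation on E = Frac R whose valuation ring is the localization
    -- of R at the height-one prime ideal (y)
    (v : Valuation (FractionRing R) (WithZero (Multiplicative ℤ)))
    (hvring : ∀ e : FractionRing R, v e ≤ 1 ↔
      ∃ p q : R, q ∉ Ideal.span {y} ∧
        algebraMap R (FractionRing R) q * e = algebraMap R (FractionRing R) p)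
    -- E_y is the completion of E with respect to v
    (Ey : Type*) [Field Ey] (ι : FractionRing R →+* Ey)
    (w : Valuation Ey (WithZero (Multiplicative ℤ)))
    (hcompl : IsValuationCompletion v ι w)
    -- q = Σ aᵢ Zᵢ² is a diagonal quadratic form over E with aᵢ = x^{rᵢ} y^{sᵢ} uᵢ
    (n : ℕ) (a : Fin n → FractionRing R)
    (ha : ∀ i, ∃ (r s : ℕ) (u : Rˣ),
      a i = algebraMap R (FractionRing R) (x ^ r * y ^ s * (u : R)))
    -- if q is isotropic over E_y ...
    (hiso : ∃ z : Fin n → Ey, z ≠ 0 ∧ ∑ i, ι (a i) * z i ^ 2 = 0) :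
    -- ... then q is isotropic over E
    ∃ z : Fin n → FractionRing R, z ≠ 0 ∧ ∑ i, a i * z i ^ 2 = 0 := by
  have hdim' : 1 < ringKrullDim R := by rw [hdim]; exact_mod_cast one_lt_two
  have hx := notMem_span_singleton_of_maximalIdeal_eq_span_pair hdim' hxy
  have hy := ne_zero_of_maximalIdeal_eq_span_pair hdim' hxy
  have hv : IsValuationOfLocalizationAt v y := hvring
  have h2 : IsUnit (2 : R) :=
    (residue_ne_zero_iff_isUnit 2).1 (by rw [map_ofNat]; exact Ring.two_ne_zero hchar)
  set φ := algebraMap R (FractionRing R)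
  choose r s u ha using ha
  have had : ∀ i, a i = φ (y ^ (s i % 2) * (x ^ (r i % 2) * u i)) *
      φ (x ^ (r i / 2) * y ^ (s i / 2)) ^ 2 := fun i => by
    rw [ha i, pow_mul_pow_mul_eq_mod_two_mul_sq, map_mul, map_pow]
  have hd : ∀ i, φ (x ^ (r i / 2) * y ^ (s i / 2)) ≠ 0 := fun i => by
    rw [ne_eq, IsFractionRing.to_map_eq_zero_iff]
    exact mul_ne_zero (pow_ne_zero _ fun h => hx (h ▸ Ideal.zero_mem _)) (pow_ne_zero _ hy)
  have hparity : ∀ (k : Fin n → ℕ) (t : Finset (Fin n)), ∀ i ∈ t, k i % 2 ≤ 1 :=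
    fun k _ i _ => by omega
  obtain ⟨z, hz, hiso⟩ := hiso
  obtain ⟨ζ, hζ, hζiso⟩ := exists_sum_mul_sq_eq_zero_of_eq_mul_sq
    (fun i => by rw [had i, map_mul, map_pow]) (fun i => (map_ne_zero ι).2 (hd i)) hz hiso
  obtain ⟨P, ⟨j, hPj⟩, hP⟩ :=
    hv.exists_primitive_sq_dvd_sum hy ι w hcompl.1 hcompl.2.1 hζ hζiso
  obtain ⟨δ₀, j₁, -, hj₁, hPj₁, hA⟩ :=
    exists_class_dvd_sum_of_sq_dvd_sum hy (hparity s _) hP (Finset.mem_univ j) hPj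
  obtain ⟨ε₀, c, j₂, hj₂, hj₂ε, hcj₂, hc⟩ :=
    exists_class_residue_zero_of_dvd_sum hxy hv.isPrime_span_singleton hx (hparity r _) u hA
      (Finset.mem_filter.2 ⟨Finset.mem_univ _, hj₁⟩) hPj₁
  obtain ⟨c', hc'j, hc'⟩ :=
    exists_sum_mul_sq_eq_zero_of_mem_maximalIdeal h2 u (Finset.mem_filter.2 ⟨hj₂, hj₂ε⟩) hcj₂ hc
  refine exists_sum_mul_sq_eq_zero_of_subform (g := φ (y ^ δ₀ * x ^ ε₀)) (u := fun i => φ (u i))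
    (c := fun i => φ (c' i)) (fun i hi => ?_) (fun i _ => hd i) (Finset.mem_filter.2 ⟨hj₂, hj₂ε⟩)
    ((map_ne_zero_iff φ (IsFractionRing.injective _ _)).2 hc'j)
    (by simpa only [map_sum, map_mul, map_pow, map_zero] using congrArg φ hc')
  simp only [Finset.mem_filter, Finset.mem_univ, true_and] at hi
  rw [had i, hi.1, hi.2, ← mul_assoc, map_mul φ (y ^ δ₀ * x ^ ε₀)]

theorem stmt_7 (R : Type*) [CommRing R] [IsDomain R] [IsNoetherianRing R] [IsLocalRing R]
    [IsAdicComplete (IsLocalRing.maximalIdeal R) R]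
    (x y : R) (hxy : IsLocalRing.maximalIdeal R = Ideal.span {x, y})
    (hdim : ringKrullDim R = 2)
    (hchar : ringChar (IsLocalRing.ResidueField R) ≠ 2)
    -- v is the discrete valuation on E = Frac R whose valuation ring is the localization
    -- of R at the height-one prime ideal (y)
    (v : Valuation (FractionRing R) (WithZero (Multiplicative ℤ)))
    (hv : Function.Surjective v)
    (hvring : ∀ e : FractionRing R, v e ≤ 1 ↔
      ∃ p q : R, q ∉ Ideal.span {y} ∧
        algebraMap R (FractionRing R) q * e = algebraMap R (FractionRing R) p)
    -- E_y is the completion of E with respect to v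
    (Ey : Type*) [Field Ey] (ι : FractionRing R →+* Ey)
    (w : Valuation Ey (WithZero (Multiplicative ℤ)))
    (hcompl : IsValuationCompletion v ι w)
    -- q = Σ aᵢ Zᵢ² is a diagonal quadratic form over E with aᵢ = x^{rᵢ} y^{sᵢ} uᵢ
    (n : ℕ) (a : Fin n → FractionRing R)
    (ha : ∀ i, ∃ (r s : ℕ) (u : Rˣ),
      a i = algebraMap R (FractionRing R) (x ^ r * y ^ s * (u : R)))
    -- if q is isotropic over E_y ...
    (hiso : ∃ z : Fin n → Ey, z ≠ 0 ∧ ∑ i, ι (a i) * z i ^ 2 = 0) :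
    -- ... then q is isotropic over E
    ∃ z : Fin n → FractionRing R, z ≠ 0 ∧ ∑ i, a i * z i ^ 2 = 0 :=
  stmt_7_general R x y hxy hdim hchar v hvring Ey ι w hcompl n a ha hiso
end
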